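/- arXiv:1201.5995 — 8 statements merged into one kernel-verified Lean document; each statement's English description precedes it below -/
import Mathlib

section
/- For n ≥ 3, the reduction map R_n is not extremal in the cone of positive maps: there exists a positive map Λ not proportional to R_n such that R_n − Λ is still a positive map. -/
open scoped ComplexOrder

/-- The reduction map `R_n(X) = (Tr X) • I - X` as a linear map. -/
noncomputable def Rlin (n : ℕ) :
    Matrix (Fin n) (Fin n) ℂ →ₗ[ℂ] Matrix (Fin n) (Fin n) ℂ where
  toFun X := X.trace • (1 : Matrix (Fin n) (Fin n) ℂ) - X
  map_add' X Y := by simp [Matrix.trace_add, add_smul]; abel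
  map_smul' c X := by simp [Matrix.trace_smul, smul_smul, smul_sub]

/-!
With `V i j = E i j - E j i`, the reduction map decomposes as
`2 R(X) = ∑_{i, j} V i j * Xᵀ * (V i j)ᴴ`, where every summand is a positive map (a transpose
followed by a congruence) and the summands for `(i, j)` and `(j, i)` agree. So for `Λ` a single
summand, `R - Λ` is half the sum of the remaining ones and is positive too. If `n ≥ 3`, the
summand `Λ` for `(0, 1)` kills `E 2 2` while `R (E 2 2) = I - E 2 2` does not vanish, and
`Λ ≠ 0`; hence `Λ` is not proportional to `R`.
-/

theorem LinearMap.not_exists_eq_smul_of_apply_eq_zero {K M N : Type*} [Field K]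
    [AddCommGroup M] [Module K M] [AddCommGroup N] [Module K N]
    {f g : M →ₗ[K] N} {x y : M} (hfx : f x = 0) (hgx : g x ≠ 0) (hfy : f y ≠ 0) :
    ¬ ∃ c : K, f = c • g := by
  rintro ⟨c, rfl⟩
  obtain rfl : c = 0 := by simpa [hgx] using hfx
  simp at hfy

namespace Matrix

variable {m R : Type*} [DecidableEq m]

section Ring

variable [Ring R]

def antisymmUnit (i j : m) : Matrix m m R := single i j 1 - single j i 1

theorem antisymmUnit_swap (i j : m) : (antisymmUnit j i : Matrix m m R) = -antisymmUnit i j :=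
  (neg_sub _ _).symm

variable [Fintype m]

theorem trace_smul_one_sub_single_ne_zero [Nontrivial R] {i k : m} (hik : i ≠ k) :
    (single k k (1 : R)).trace • (1 : Matrix m m R) - single k k 1 ≠ 0 := by
  intro h
  simpa [single_apply, hik, hik.symm] using congrFun (congrFun h i) i

theorem antisymmUnit_mul_mul_conjTranspose [StarRing R] (Y : Matrix m m R) (i j : m) :
    antisymmUnit i j * Y * (antisymmUnit i j)ᴴ =
      single i i (Y j j) + single j j (Y i i) - single i j (Y j i) - single j i (Y i j) := by
  simp only [antisymmUnit, conjTranspose_sub, conjTranspose_single, star_one, sub_mul, mul_sub,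
    single_mul_mul_single, one_mul, mul_one]
  abel

end Ring

variable [Fintype m]

section CommRing

variable [CommRing R] [StarRing R]

theorem sum_antisymmUnit_mul_mul_conjTranspose (Y : Matrix m m R) :
    ∑ p : m × m, antisymmUnit p.1 p.2 * Y * (antisymmUnit p.1 p.2)ᴴ =
      (2 : R) • (Y.trace • 1 - Yᵀ) := by
  ext a b
  simp only [antisymmUnit_mul_mul_conjTranspose, Fintype.sum_prod_type, sum_apply, add_apply,
    sub_apply, single_apply, smul_apply, one_apply, transpose_apply, trace, diag]
  by_cases hab : a = b
  · subst hab
    simp [ite_and, Finset.sum_add_distrib, Finset.sum_ite_eq']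
    ring
  · simp [ite_and, Finset.sum_add_distrib, Finset.sum_ite_eq', hab]
    ring

def transposeCongr (V : Matrix m m R) : Matrix m m R →ₗ[R] Matrix m m R where
  toFun X := V * Xᵀ * Vᴴ
  map_add' X Y := by rw [transpose_add, mul_add, add_mul]
  map_smul' c X := by rw [transpose_smul, Matrix.mul_smul, Matrix.smul_mul, RingHom.id_apply]

theorem transposeCongr_apply (V X : Matrix m m R) : transposeCongr V X = V * Xᵀ * Vᴴ := rfl

theorem two_smul_trace_smul_one_sub_eq_sum_transposeCongr (X : Matrix m m R) :
    (2 : R) • (X.trace • 1 - X) = ∑ p : m × m, transposeCongr (antisymmUnit p.1 p.2) X := by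
  simpa only [transposeCongr_apply, trace_transpose, transpose_transpose] using
    (sum_antisymmUnit_mul_mul_conjTranspose Xᵀ).symm

theorem transposeCongr_antisymmUnit_single_of_ne {i j k : m} (hki : k ≠ i) (hkj : k ≠ j) :
    transposeCongr (antisymmUnit i j) (single k k (1 : R)) = 0 := by
  rw [transposeCongr_apply, transpose_single, antisymmUnit_mul_mul_conjTranspose]
  simp [hki, hkj]

theorem transposeCongr_antisymmUnit_single_self {i j : m} (hij : i ≠ j) :
    transposeCongr (antisymmUnit i j) (single i i (1 : R)) = single j j 1 := by
  rw [transposeCongr_apply, transpose_single, antisymmUnit_mul_mul_conjTranspose]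
  simp [hij]

variable [PartialOrder R]

theorem posSemidef_transposeCongr (V : Matrix m m R) {X : Matrix m m R} (hX : X.PosSemidef) :
    (transposeCongr V X).PosSemidef :=
  hX.transpose.mul_mul_conjTranspose_same V

end CommRing

theorem posSemidef_trace_smul_one_sub_sub_transposeCongr_antisymmUnit {𝕜 : Type*} [RCLike 𝕜]
    {X : Matrix m m 𝕜} (hX : X.PosSemidef) {i j : m} (hij : i ≠ j) :
    (X.trace • 1 - X - transposeCongr (antisymmUnit i j) X).PosSemidef := by
  set K : m × m → Matrix m m 𝕜 := fun p => transposeCongr (antisymmUnit p.1 p.2) X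
  have hji : (j, i) ∈ (Finset.univ.erase (i, j) : Finset (m × m)) := by simp [hij.symm]
  have hK : K (j, i) = K (i, j) := by
    simp only [K]
    rw [antisymmUnit_swap, transposeCongr_apply, transposeCongr_apply, conjTranspose_neg, neg_mul,
      mul_neg, neg_mul, neg_neg]
  have hsplit : X.trace • 1 - X - K (i, j) =
      (2 : 𝕜)⁻¹ • ∑ p ∈ (Finset.univ.erase (i, j)).erase (j, i), K p := by
    rw [Finset.sum_erase_eq_sub hji, Finset.sum_erase_eq_sub (Finset.mem_univ _),
      ← two_smul_trace_smul_one_sub_eq_sum_transposeCongr, hK]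
    module
  show (X.trace • 1 - X - K (i, j)).PosSemidef
  rw [hsplit]
  exact (posSemidef_sum _ fun p _ => posSemidef_transposeCongr _ hX).smul (by positivity)

end Matrix

open Matrix

/-- For `n ≥ 3` the reduction map is not extremal in the cone of positive maps:
there is a positive map `Λ`, not proportional to `R_n`, with `R_n - Λ` positive. -/
theorem reduction_map_not_extremal (n : ℕ) (hn : 3 ≤ n) :
    ∃ Λ : Matrix (Fin n) (Fin n) ℂ →ₗ[ℂ] Matrix (Fin n) (Fin n) ℂ,
      (∀ X, X.PosSemidef → (Λ X).PosSemidef) ∧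
      (∀ X, X.PosSemidef → (Rlin n X - Λ X).PosSemidef) ∧
      ¬ (∃ c : ℂ, Λ = c • Rlin n) := by
  let i : Fin n := ⟨0, by omega⟩
  let j : Fin n := ⟨1, by omega⟩
  let k : Fin n := ⟨2, by omega⟩
  have hij : i ≠ j := by simp [i, j, Fin.ext_iff]
  have hki : k ≠ i := by simp [i, k, Fin.ext_iff]
  have hkj : k ≠ j := by simp [j, k, Fin.ext_iff]
  refine ⟨transposeCongr (antisymmUnit i j), fun X hX => posSemidef_transposeCongr _ hX,
    fun X hX => posSemidef_trace_smul_one_sub_sub_transposeCongr_antisymmUnit hX hij, ?_⟩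
  refine LinearMap.not_exists_eq_smul_of_apply_eq_zero (y := single i i 1)
    (transposeCongr_antisymmUnit_single_of_ne hki hkj) (trace_smul_one_sub_single_ne_zero hki.symm) ?_
  rw [transposeCongr_antisymmUnit_single_self hij]
  exact fun h => by simpa using congrFun (congrFun h j) j
end

section
/- The map Φ_n on M_{2n}(ℂ) defined blockwise by Φ_n([[X11,X12],[X21,X22]]) = (1/n)·[[I_n·Tr X22, −X12 − R_n(X21)],[−X21 − R_n(X12), I_n·Tr X11]] is a positive map: it sends positive semidefinite matrices to positive semidefinite matrices. -/
open scoped ComplexOrder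

/-- The reduction map `R_n(X) = (Tr X) • I - X` on `n × n` complex matrices. -/
noncomputable def Rmap (n : ℕ) (X : Matrix (Fin n) (Fin n) ℂ) :
    Matrix (Fin n) (Fin n) ℂ :=
  X.trace • (1 : Matrix (Fin n) (Fin n) ℂ) - X

/-- The map `Φ_n` on `2n × 2n` complex matrices, written in block form. -/
noncomputable def Phi (n : ℕ)
    (X : Matrix (Fin n ⊕ Fin n) (Fin n ⊕ Fin n) ℂ) :
    Matrix (Fin n ⊕ Fin n) (Fin n ⊕ Fin n) ℂ :=
  ((n : ℂ)⁻¹) • Matrix.fromBlocks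
    (X.toBlocks₂₂.trace • (1 : Matrix (Fin n) (Fin n) ℂ))
    (-(X.toBlocks₁₂) - Rmap n X.toBlocks₂₁)
    (-(X.toBlocks₂₁) - Rmap n X.toBlocks₁₂)
    (X.toBlocks₁₁.trace • (1 : Matrix (Fin n) (Fin n) ℂ))

open Matrix
open scoped InnerProductSpace

/-!
Since `Φ_n` is additive and commutes with `ᴴ`, and a positive semidefinite matrix is a sum of
rank-one matrices `w wᴴ`, it suffices to treat `X = w wᴴ` with `w = (y₁, y₂)`. For a test vector
`v = (a, b)`, `n · vᴴ Φ_n(w wᴴ) v = ‖a‖²‖y₂‖² + ‖b‖²‖y₁‖² - 2 Re ⟪y₁, T⟫` where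
`T = ⟪a, b⟫ y₂ + ⟪b, y₂⟫ a - ⟪a, y₂⟫ b`. Splitting `b` and `y₂` into their components along `a`
and orthogonal to `a` shows `‖T‖² = ‖a‖²‖b‖²‖y₂‖² - ‖a‖² (‖b'‖²‖y₂'‖² - |⟪b', y₂'⟫|²)` for the
orthogonal parts `b'`, `y₂'`, so `‖T‖ ≤ ‖a‖‖b‖‖y₂‖` by Cauchy–Schwarz; Cauchy–Schwarz once more
and `2xy ≤ x² + y²` give `2 Re ⟪y₁, T⟫ ≤ ‖a‖²‖y₂‖² + ‖b‖²‖y₁‖²`.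
-/

section InnerProductSpace

variable {E : Type*} [NormedAddCommGroup E] [InnerProductSpace ℂ E]

noncomputable def innerTriple (a b v : E) : E := ⟪a, b⟫_ℂ • v + ⟪b, v⟫_ℂ • a - ⟪a, v⟫_ℂ • b

theorem norm_innerTriple_le (a b v : E) : ‖innerTriple a b v‖ ≤ ‖a‖ * ‖b‖ * ‖v‖ := by
  rcases eq_or_ne a 0 with rfl | ha
  · simp [innerTriple]
  -- `u` and `w` are `‖a‖²` times the components of `b` and `v` orthogonal to `a`.
  set u := ⟪a, a⟫_ℂ • b - ⟪a, b⟫_ℂ • a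
  set w := ⟪a, a⟫_ℂ • v - ⟪a, v⟫_ℂ • a
  have gram : ⟪a, a⟫_ℂ ^ 3 *
      (⟪a, a⟫_ℂ * ⟪b, b⟫_ℂ * ⟪v, v⟫_ℂ - ⟪innerTriple a b v, innerTriple a b v⟫_ℂ)
      = ⟪u, u⟫_ℂ * ⟪w, w⟫_ℂ - ⟪u, w⟫_ℂ * ⟪w, u⟫_ℂ := by
    simp only [innerTriple, u, w, inner_add_left, inner_add_right, inner_sub_left,
      inner_sub_right, inner_smul_left, inner_smul_right, inner_self_conj, inner_conj_symm]
    rw [← inner_conj_symm a b, ← inner_conj_symm a v, ← inner_conj_symm b v]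
    ring
  have gram_norm : ‖a‖ ^ 6 * ((‖a‖ * ‖b‖ * ‖v‖) ^ 2 - ‖innerTriple a b v‖ ^ 2)
      = ‖u‖ ^ 2 * ‖w‖ ^ 2 - ‖⟪u, w⟫_ℂ‖ ^ 2 := by
    rw [← inner_conj_symm w u, RCLike.mul_conj] at gram
    simp only [inner_self_eq_norm_sq_to_K] at gram
    apply Complex.ofReal_injective
    push_cast
    linear_combination gram
  have cauchy_schwarz : ‖⟪u, w⟫_ℂ‖ ^ 2 ≤ ‖u‖ ^ 2 * ‖w‖ ^ 2 := by
    rw [← mul_pow]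
    gcongr
    exact norm_inner_le_norm u w
  have : 0 < ‖a‖ ^ 6 := by positivity
  refine (sq_le_sq₀ (norm_nonneg _) (by positivity)).1 ?_
  nlinarith

theorem inner_innerTriple_add_inner_le (a b y₁ y₂ : E) :
    ⟪y₁, innerTriple a b y₂⟫_ℂ + ⟪innerTriple a b y₂, y₁⟫_ℂ
      ≤ ⟪a, a⟫_ℂ * ⟪y₂, y₂⟫_ℂ + ⟪b, b⟫_ℂ * ⟪y₁, y₁⟫_ℂ := by
  have hre : RCLike.re ⟪y₁, innerTriple a b y₂⟫_ℂ ≤ ‖y₁‖ * (‖a‖ * ‖b‖ * ‖y₂‖) :=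
    (re_inner_le_norm (𝕜 := ℂ) y₁ _).trans
      (mul_le_mul_of_nonneg_left (norm_innerTriple_le a b y₂) (norm_nonneg y₁))
  have amgm : 2 * RCLike.re ⟪y₁, innerTriple a b y₂⟫_ℂ
      ≤ ‖a‖ ^ 2 * ‖y₂‖ ^ 2 + ‖b‖ ^ 2 * ‖y₁‖ ^ 2 := by
    nlinarith [sq_nonneg (‖a‖ * ‖y₂‖ - ‖b‖ * ‖y₁‖)]
  rw [← inner_conj_symm (innerTriple a b y₂) y₁, RCLike.add_conj]
  simp only [inner_self_eq_norm_sq_to_K]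
  simpa using (RCLike.ofReal_le_ofReal (K := ℂ)).2 amgm

end InnerProductSpace

theorem vecMulVec_sumElim_sumElim {l m α : Type*} [Mul α] (x : l → α) (y : m → α)
    (x' : l → α) (y' : m → α) :
    vecMulVec (Sum.elim x y) (Sum.elim x' y') =
      fromBlocks (vecMulVec x x') (vecMulVec x y') (vecMulVec y x') (vecMulVec y y') := by
  ext (i | i) (j | j) <;> rfl

lemma Rmap_add (n : ℕ) (X Y : Matrix (Fin n) (Fin n) ℂ) :
    Rmap n (X + Y) = Rmap n X + Rmap n Y := by
  simp only [Rmap, trace_add, add_smul]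
  abel

lemma Rmap_conjTranspose (n : ℕ) (X : Matrix (Fin n) (Fin n) ℂ) :
    Rmap n Xᴴ = (Rmap n X)ᴴ := by
  simp [Rmap, trace_conjTranspose, conjTranspose_sub, conjTranspose_smul]

lemma Phi_add (n : ℕ) (X Y : Matrix (Fin n ⊕ Fin n) (Fin n ⊕ Fin n) ℂ) :
    Phi n (X + Y) = Phi n X + Phi n Y := by
  have h₁₁ : (X + Y).toBlocks₁₁ = X.toBlocks₁₁ + Y.toBlocks₁₁ := rfl
  have h₁₂ : (X + Y).toBlocks₁₂ = X.toBlocks₁₂ + Y.toBlocks₁₂ := rfl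
  have h₂₁ : (X + Y).toBlocks₂₁ = X.toBlocks₂₁ + Y.toBlocks₂₁ := rfl
  have h₂₂ : (X + Y).toBlocks₂₂ = X.toBlocks₂₂ + Y.toBlocks₂₂ := rfl
  simp only [Phi, h₁₁, h₁₂, h₂₁, h₂₂, Rmap_add, trace_add, add_smul, ← smul_add, fromBlocks_add]
  congr 2 <;> abel

lemma Phi_conjTranspose (n : ℕ) (X : Matrix (Fin n ⊕ Fin n) (Fin n ⊕ Fin n) ℂ) :
    Phi n Xᴴ = (Phi n X)ᴴ := by
  have h₁₁ : Xᴴ.toBlocks₁₁ = X.toBlocks₁₁ᴴ := rfl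
  have h₁₂ : Xᴴ.toBlocks₁₂ = X.toBlocks₂₁ᴴ := rfl
  have h₂₁ : Xᴴ.toBlocks₂₁ = X.toBlocks₁₂ᴴ := rfl
  have h₂₂ : Xᴴ.toBlocks₂₂ = X.toBlocks₂₂ᴴ := rfl
  simp [Phi, h₁₁, h₁₂, h₂₁, h₂₂, fromBlocks_conjTranspose, Rmap_conjTranspose,
    conjTranspose_smul, trace_conjTranspose]

lemma star_dotProduct_Phi_vecMulVec_mulVec (n : ℕ) (a b y₁ y₂ : EuclideanSpace ℂ (Fin n)) :
    star (Sum.elim a.ofLp b.ofLp) ⬝ᵥ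
        (Phi n (vecMulVec (Sum.elim y₁.ofLp y₂.ofLp) (star (Sum.elim y₁.ofLp y₂.ofLp)))
          *ᵥ Sum.elim a.ofLp b.ofLp)
      = (n : ℂ)⁻¹ * (⟪a, a⟫_ℂ * ⟪y₂, y₂⟫_ℂ + ⟪b, b⟫_ℂ * ⟪y₁, y₁⟫_ℂ
          - (⟪y₁, innerTriple a b y₂⟫_ℂ + ⟪innerTriple a b y₂, y₁⟫_ℂ)) := by
  simp only [Function.star_sumElim, vecMulVec_sumElim_sumElim]
  simp only [innerTriple, inner_add_left, inner_add_right, inner_sub_left, inner_sub_right,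
    inner_smul_left, inner_smul_right, inner_conj_symm]
  simp only [EuclideanSpace.inner_eq_star_dotProduct, Phi, Rmap,
    toBlocks_fromBlocks₁₁, toBlocks_fromBlocks₁₂, toBlocks_fromBlocks₂₁, toBlocks_fromBlocks₂₂,
    smul_mulVec, fromBlocks_mulVec, dotProduct_smul,
    sumElim_dotProduct_sumElim, sub_mulVec, neg_mulVec, one_mulVec, vecMulVec_mulVec,
    op_smul_eq_smul, trace_vecMulVec, Sum.elim_comp_inl, Sum.elim_comp_inr,
    dotProduct_comm (star _), add_dotProduct, sub_dotProduct, neg_dotProduct, smul_dotProduct,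
    smul_eq_mul]
  ring

lemma posSemidef_Phi_vecMulVec_self_star (n : ℕ) (w : Fin n ⊕ Fin n → ℂ) :
    (Phi n (vecMulVec w (star w))).PosSemidef := by
  refine .of_dotProduct_mulVec_nonneg ?_ fun v => ?_
  · rw [IsHermitian, ← Phi_conjTranspose, (posSemidef_vecMulVec_self_star w).isHermitian.eq]
  · have h := star_dotProduct_Phi_vecMulVec_mulVec n (WithLp.toLp 2 (v ∘ Sum.inl))
      (WithLp.toLp 2 (v ∘ Sum.inr)) (WithLp.toLp 2 (w ∘ Sum.inl)) (WithLp.toLp 2 (w ∘ Sum.inr))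
    simp only [Sum.elim_comp_inl_inr] at h
    rw [h]
    exact mul_nonneg (by positivity) (sub_nonneg.2 (inner_innerTriple_add_inner_le ..))

theorem Phi_positive_general (n : ℕ)
    (X : Matrix (Fin n ⊕ Fin n) (Fin n ⊕ Fin n) ℂ) (hX : X.PosSemidef) :
    (Phi n X).PosSemidef := by
  obtain ⟨m, w, rfl⟩ := posSemidef_iff_eq_sum_vecMulVec.mp hX
  rw [show Phi n _ = _ from map_sum (AddMonoidHom.mk' (Phi n) (Phi_add n)) _ _]
  exact posSemidef_sum _ fun k _ => posSemidef_Phi_vecMulVec_self_star n (w k)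

/-- `Φ_n` is a positive map: it preserves positive semidefiniteness. -/
theorem Phi_positive (n : ℕ) (hn : 2 ≤ n)
    (X : Matrix (Fin n ⊕ Fin n) (Fin n ⊕ Fin n) ℂ) (hX : X.PosSemidef) :
    (Phi n X).PosSemidef :=
  Phi_positive_general n X hX
end

section
/- The map Φ_n is irreducible: if Z ∈ M_{2n}(ℂ) satisfies [Φ_n(X), Z] = 0 for all X ∈ M_{2n}(ℂ), then Z = c·I_{2n} for some scalar c. -/
/-!
The range of `Φ_n` contains `J = [[0, I], [I, 0]]` and `[[0, M], [-M, 0]]` for every traceless `M`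
(images of off-diagonal block matrices). Commuting with `J` forces `Z = [[A, B], [B, A]]`; commuting
with the second family makes `A` commute and `B` anticommute with every traceless matrix, so `A` is
scalar and, as soon as `n ≥ 2`, `B = 0`.
-/

open scoped ComplexOrder

open Matrix

namespace Matrix

variable {ι R : Type*} [Fintype ι] [DecidableEq ι]

theorem fromBlocks_zero_mul_comm_iff {m n : Type*} [Fintype m] [Fintype n] [Semiring R]
    (P : Matrix m n R) (Q : Matrix n m R) (A : Matrix m m R) (B : Matrix m n R)
    (C : Matrix n m R) (D : Matrix n n R) :
    fromBlocks 0 P Q 0 * fromBlocks A B C D = fromBlocks A B C D * fromBlocks 0 P Q 0 ↔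
      P * C = B * Q ∧ P * D = A * P ∧ Q * A = D * Q ∧ Q * B = C * P := by
  simp [fromBlocks_multiply]

theorem mem_range_scalar_of_forall_trace_eq_zero_commute [Semiring R] {A : Matrix ι ι R}
    (hA : ∀ M : Matrix ι ι R, M.trace = 0 → Commute M A) : A ∈ Set.range (scalar ι) :=
  mem_range_scalar_of_commute_single fun _ _ hij => hA _ (trace_single_eq_of_ne _ _ _ hij)

theorem eq_zero_of_forall_trace_eq_zero_anticommute [Nontrivial ι] [Ring R] [NoZeroDivisors R]
    [CharZero R] {W : Matrix ι ι R} (hW : ∀ M : Matrix ι ι R, M.trace = 0 → M * W = -(W * M)) :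
    W = 0 := by
  ext k l
  obtain ⟨j, hjk⟩ := exists_ne k
  rcases eq_or_ne k l with rfl | hkl
  · have h := congrFun₂ (hW (single k k 1 - single j j 1) (by simp [trace_sub])) k k
    simpa [sub_mul, mul_sub, hjk, hjk.symm, CharZero.eq_neg_self_iff] using h
  · have h := congrFun₂ (hW (single j k 1) (trace_single_eq_of_ne _ _ _ hjk)) j l
    simpa [hkl.symm] using h

end Matrix

theorem Rmap_of_trace_eq_zero {n : ℕ} {M : Matrix (Fin n) (Fin n) ℂ} (hM : M.trace = 0) :
    Rmap n M = -M := by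
  simp [Rmap, hM]

theorem Phi_fromBlocks_zero (n : ℕ) (A B : Matrix (Fin n) (Fin n) ℂ) :
    Phi n (fromBlocks 0 A B 0) = (n : ℂ)⁻¹ • fromBlocks 0 (-A - Rmap n B) (-B - Rmap n A) 0 := by
  simp [Phi]

theorem Phi_fromBlocks_zero_eq {n : ℕ} (hn : n ≠ 0) {A B P Q : Matrix (Fin n) (Fin n) ℂ}
    (hP : -A - Rmap n B = (n : ℂ) • P) (hQ : -B - Rmap n A = (n : ℂ) • Q) :
    Phi n (fromBlocks 0 A B 0) = fromBlocks 0 P Q 0 := by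
  have hn' : (n : ℂ) ≠ 0 := Nat.cast_ne_zero.mpr hn
  rw [Phi_fromBlocks_zero, hP, hQ, fromBlocks_smul]
  simp [smul_smul, hn']

theorem Phi_fromBlocks_neg_one {n : ℕ} (hn : n ≠ 0) :
    Phi n (fromBlocks 0 (-1) (-1) 0) = fromBlocks 0 1 1 0 := by
  have h : -(-1) - Rmap n (-1 : Matrix (Fin n) (Fin n) ℂ) = (n : ℂ) • 1 := by
    rw [Rmap, trace_neg, trace_one, Fintype.card_fin]; module
  exact Phi_fromBlocks_zero_eq hn h h

theorem Phi_fromBlocks_smul_of_trace_eq_zero {n : ℕ} (hn : n ≠ 0) {M : Matrix (Fin n) (Fin n) ℂ}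
    (hM : M.trace = 0) :
    Phi n (fromBlocks 0 (-((n : ℂ) / 2) • M) (((n : ℂ) / 2) • M) 0) = fromBlocks 0 M (-M) 0 := by
  apply Phi_fromBlocks_zero_eq hn <;>
    rw [Rmap_of_trace_eq_zero (by simp [trace_smul, hM])] <;> module

/-- `Φ_n` is irreducible: anything commuting with the whole range of `Φ_n`
is a scalar multiple of the identity. -/
theorem Phi_irreducible (n : ℕ) (hn : 2 ≤ n)
    (Z : Matrix (Fin n ⊕ Fin n) (Fin n ⊕ Fin n) ℂ)
    (hZ : ∀ X : Matrix (Fin n ⊕ Fin n) (Fin n ⊕ Fin n) ℂ,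
      Phi n X * Z = Z * Phi n X) :
    ∃ c : ℂ, Z = c • (1 : Matrix (Fin n ⊕ Fin n) (Fin n ⊕ Fin n) ℂ) := by
  have : Nontrivial (Fin n) := Fin.nontrivial_iff_two_le.mpr hn
  have hn₀ : n ≠ 0 := by omega
  obtain ⟨A, B, C, D, rfl⟩ : ∃ A B C D, Z = fromBlocks A B C D :=
    ⟨_, _, _, _, (fromBlocks_toBlocks Z).symm⟩
  have hJ := hZ (fromBlocks 0 (-1) (-1) 0)
  rw [Phi_fromBlocks_neg_one hn₀, fromBlocks_zero_mul_comm_iff] at hJ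
  obtain ⟨hCB, hDA, -, -⟩ := hJ
  simp only [one_mul, mul_one] at hCB hDA
  subst C D
  have hblocks (M : Matrix (Fin n) (Fin n) ℂ) (hM : M.trace = 0) :
      M * B = -(B * M) ∧ M * A = A * M := by
    have h := hZ (fromBlocks 0 (-((n : ℂ) / 2) • M) (((n : ℂ) / 2) • M) 0)
    rw [Phi_fromBlocks_smul_of_trace_eq_zero hn₀ hM, fromBlocks_zero_mul_comm_iff] at h
    exact ⟨by simpa using h.1, h.2.1⟩
  obtain ⟨c, rfl⟩ := mem_range_scalar_of_forall_trace_eq_zero_commute fun M hM => (hblocks M hM).2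
  obtain rfl := eq_zero_of_forall_trace_eq_zero_anticommute fun M hM => (hblocks M hM).1
  refine ⟨c, ?_⟩
  rw [← fromBlocks_one, fromBlocks_smul]
  simp [scalar_apply, smul_one_eq_diagonal]
end

section
/- Every tensor Ψ ∈ (ℂ^n)^{⊗3} can be written as Ψ = A + B with A totally symmetric (A ∈ S_{123}) and B satisfying Σ_i B_{iji} = 0 for all j (B ∈ T_{13}); i.e., (ℂ^n)^{⊗3} = S_{123} + T_{13}. -/
/-!
The partial trace `j ↦ ∑ i, Ψ (i, j, i)` is already surjective on totally symmetric tensors: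
symmetrizing `v ⊗ δ` gives `v i δ_jk + v j δ_ik + v k δ_ij`, whose `1-3` trace is `(n + 2) v`.
So take `A` to be this tensor for `v` the trace of `Ψ` divided by `n + 2`, and `B = Ψ - A`.
-/

open Finset

variable {R ι : Type*} [CommSemiring R] [DecidableEq ι]

def symmDeltaTensor (v : ι → R) : ι × ι × ι → R := fun p =>
  (if p.2.1 = p.2.2 then v p.1 else 0) + (if p.1 = p.2.2 then v p.2.1 else 0) +
    (if p.1 = p.2.1 then v p.2.2 else 0)

theorem symmDeltaTensor_apply_comm (v : ι → R) (i j k : ι) :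
    symmDeltaTensor v (i, j, k) = symmDeltaTensor v (i, k, j) ∧
      symmDeltaTensor v (i, j, k) = symmDeltaTensor v (j, i, k) ∧
      symmDeltaTensor v (i, j, k) = symmDeltaTensor v (j, k, i) ∧
      symmDeltaTensor v (i, j, k) = symmDeltaTensor v (k, i, j) ∧
      symmDeltaTensor v (i, j, k) = symmDeltaTensor v (k, j, i) := by
  simp only [symmDeltaTensor, eq_comm (a := j) (b := i), eq_comm (a := k) (b := i),
    eq_comm (a := k) (b := j)]
  refine ⟨?_, ?_, ?_, ?_, ?_⟩ <;> ring

def trace13 [Fintype ι] (Ψ : ι × ι × ι → R) (j : ι) : R := ∑ i, Ψ (i, j, i)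

theorem trace13_symmDeltaTensor [Fintype ι] (v : ι → R) (j : ι) :
    trace13 (symmDeltaTensor v) j = (Fintype.card ι + 2) * v j := by
  simp only [trace13, symmDeltaTensor, eq_comm (a := j), ↓reduceIte, sum_add_distrib, sum_ite_eq',
    mem_univ, sum_const, card_univ, nsmul_eq_mul]
  ring

/-- Every tensor in `(ℂ^n)^{⊗3}` decomposes (not necessarily uniquely) as a sum
of a totally symmetric tensor and one with vanishing `1-3` partial trace. -/
theorem decompose_S123_T13 (n : ℕ) (Ψ : Fin n × Fin n × Fin n → ℂ) :
    ∃ A B : Fin n × Fin n × Fin n → ℂ,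
      (∀ i j k : Fin n,
        A (i, j, k) = A (i, k, j) ∧ A (i, j, k) = A (j, i, k) ∧
        A (i, j, k) = A (j, k, i) ∧ A (i, j, k) = A (k, i, j) ∧
        A (i, j, k) = A (k, j, i)) ∧
      (∀ j : Fin n, (∑ i : Fin n, B (i, j, i)) = 0) ∧
      Ψ = A + B := by
  set A := symmDeltaTensor (((n : ℂ) + 2)⁻¹ • trace13 Ψ)
  have hn : (n : ℂ) + 2 ≠ 0 := by exact_mod_cast (n + 1).succ_ne_zero
  refine ⟨A, Ψ - A, symmDeltaTensor_apply_comm _, fun j => ?_, (add_sub_cancel A Ψ).symm⟩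
  have hA : trace13 A j = trace13 Ψ j := by
    rw [trace13_symmDeltaTensor, Fintype.card_fin, Pi.smul_apply, smul_eq_mul,
      mul_inv_cancel_left₀ hn]
  simpa [trace13, sum_sub_distrib, sub_eq_zero] using hA.symm
end

section
/- For x = σ ⊗ φ ∈ ℂ² ⊗ ℂ^n with σ = (α,β) and ‖φ‖ = 1, one has n·Φ_n(|x⟩⟨x|) = Π_{(β,−α)} ⊗ Π_φ^⊥ + Π_{(β̄,−ᾱ)} ⊗ Π_φ, where Π_v denotes the orthogonal projection onto the span of v and Π_φ^⊥ = I_n − Π_φ. -/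
open scoped ComplexOrder

open ComplexConjugate

/-- The (unnormalized) rank-one projector `|v⟩⟨v|`; it is the orthogonal
projection onto `span{v}` whenever `‖v‖ = 1`. -/
noncomputable def outer {ι : Type*} (v : ι → ℂ) : Matrix ι ι ℂ :=
  Matrix.vecMulVec v (star v)

/-- Kronecker product `A ⊗ B` of a `2 × 2` matrix with an `n × n` matrix,
realized as a block matrix on `ℂ^n ⊕ ℂ^n`. -/
noncomputable def kron {n : ℕ} (A : Matrix (Fin 2) (Fin 2) ℂ)
    (B : Matrix (Fin n) (Fin n) ℂ) :
    Matrix (Fin n ⊕ Fin n) (Fin n ⊕ Fin n) ℂ :=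
  Matrix.fromBlocks (A 0 0 • B) (A 0 1 • B) (A 1 0 • B) (A 1 1 • B)

/-! The state `|x⟩⟨x|` of `x = σ ⊗ φ` is `|σ⟩⟨σ| ⊗ Π_φ`. Since `Tr Π_φ = 1`, the reduction map
sends `c • Π_φ` to `c • Π_φ^⊥`, so `n·Φ_n` has scalar diagonal blocks and off-diagonal blocks mixing
`Π_φ` and `Π_φ^⊥`; on the right-hand side the diagonal blocks `|β|²(Π_φ^⊥ + Π_φ)` collapse to
`|β|² I` in the same way. -/

open Matrix

theorem trace_outer {ι : Type*} [Fintype ι] (v : ι → ℂ) :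
    (outer v).trace = ∑ i, conj (v i) * v i := by
  simp only [outer, trace, diag, vecMulVec_apply, Pi.star_apply, RCLike.star_def, mul_comm]

theorem Rmap_smul_of_trace_eq_one {n : ℕ} {P : Matrix (Fin n) (Fin n) ℂ} (hP : P.trace = 1)
    (c : ℂ) : Rmap n (c • P) = c • (1 - P) := by
  rw [Rmap, trace_smul, hP, smul_sub, smul_eq_mul, mul_one]

theorem outer_sum_elim_mul {n : ℕ} (σ : Fin 2 → ℂ) (φ : Fin n → ℂ) :
    outer (Sum.elim (fun i => σ 0 * φ i) (fun i => σ 1 * φ i)) = kron (outer σ) (outer φ) := by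
  ext (i | i) (j | j) <;>
    simp only [outer, kron, vecMulVec_apply, fromBlocks_apply₁₁, fromBlocks_apply₁₂,
      fromBlocks_apply₂₁, fromBlocks_apply₂₂, Matrix.smul_apply, smul_eq_mul, Pi.star_apply,
      Sum.elim_inl, Sum.elim_inr, star_mul'] <;> ring

theorem Phi_kron {n : ℕ} (A : Matrix (Fin 2) (Fin 2) ℂ) {P : Matrix (Fin n) (Fin n) ℂ}
    (hP : P.trace = 1) :
    (n : ℂ) • Phi n (kron A P) =
      fromBlocks (A 1 1 • 1) (-(A 0 1 • P) - A 1 0 • (1 - P))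
        (-(A 1 0 • P) - A 0 1 • (1 - P)) (A 0 0 • 1) := by
  have hn : (n : ℂ) ≠ 0 := by
    rintro hn
    obtain rfl : n = 0 := by exact_mod_cast hn
    simp [trace] at hP
  simp only [Phi, kron, toBlocks_fromBlocks₁₁, toBlocks_fromBlocks₁₂, toBlocks_fromBlocks₂₁,
    toBlocks_fromBlocks₂₂, Rmap_smul_of_trace_eq_one hP, trace_smul, hP, smul_smul,
    mul_inv_cancel₀ hn, one_smul, smul_eq_mul, mul_one]

theorem Phi_on_product_vector_general (n : ℕ)
    (σ : Fin 2 → ℂ) (φ : Fin n → ℂ)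
    (hφ : (∑ i : Fin n, conj (φ i) * φ i) = 1) :
    (n : ℂ) • Phi n (outer (Sum.elim (fun i => σ 0 * φ i) (fun i => σ 1 * φ i))) =
      kron (outer ![σ 1, -(σ 0)]) (1 - outer φ) +
      kron (outer ![conj (σ 1), -(conj (σ 0))]) (outer φ) := by
  rw [outer_sum_elim_mul, Phi_kron _ (by rw [trace_outer, hφ]), kron, kron, fromBlocks_add]
  simp only [outer, vecMulVec_apply, Pi.star_apply, RCLike.star_def, Matrix.cons_val_zero,
    Matrix.cons_val_one, map_neg, Complex.conj_conj]
  congr 1 <;> module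

/-- For a product vector `x = σ ⊗ φ` with `σ = (α, β)`, `‖σ‖ = ‖φ‖ = 1`:
`n·Φ_n(|x⟩⟨x|) = Π_{(β,−α)} ⊗ Π_φ^⊥ + Π_{(β̄,−ᾱ)} ⊗ Π_φ`. -/
theorem Phi_on_product_vector (n : ℕ) (hn : 2 ≤ n)
    (σ : Fin 2 → ℂ) (φ : Fin n → ℂ)
    (hσ : (∑ i : Fin 2, conj (σ i) * σ i) = 1)
    (hφ : (∑ i : Fin n, conj (φ i) * φ i) = 1) :
    (n : ℂ) • Phi n (outer (Sum.elim (fun i => σ 0 * φ i) (fun i => σ 1 * φ i))) =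
      kron (outer ![σ 1, -(σ 0)]) (1 - outer φ) +
      kron (outer ![conj (σ 1), -(conj (σ 0))]) (outer φ) :=
  Phi_on_product_vector_general n σ φ hφ
end

section
/- For x = σ ⊗ φ with σ ∈ ℂ², φ ∈ ℂ^n, ‖σ‖ = ‖φ‖ = 1, the kernel of Φ_n(|x⟩⟨x|) is spanned by σ ⊗ φ together with all vectors σ̄ ⊗ φ^⊥ where φ^⊥ ranges over the orthogonal complement of φ in ℂ^n; in particular dim ker Φ_n(|x⟩⟨x|) = n. -/
open scoped ComplexOrder

open ComplexConjugate

/-!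
Write `x = σ ⊗ φ`, `w = (w₁, w₂) ∈ ℂⁿ ⊕ ℂⁿ`, `t = ⟨φ, w₁⟩` and `s = ⟨φ, w₂⟩`. A block computation
gives, for `‖φ‖ = 1`,
`n (Φ_n(|x⟩⟨x|) w)₁ = σ₁ u + d s φ` and `n (Φ_n(|x⟩⟨x|) w)₂ = -σ₀ u - d t φ`,
where `u = σ̄₁ w₁ - σ̄₀ w₂` and `d = σ₁ σ̄₀ - σ₀ σ̄₁`. Both `x` and every `σ̄ ⊗ ψ` with `ψ ⊥ φ`
visibly solve these equations; conversely, as `‖σ‖ = 1`, a solution `w` equals `c x + σ̄ ⊗ ψ` with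
`c = σ̄₀ t + σ̄₁ s` and `ψ = σ₀ (w₁ - t φ) + σ₁ (w₂ - s φ) ⊥ φ`.
For the dimension, `ψ ↦ ⟨φ, ψ⟩ x + σ̄ ⊗ (ψ - ⟨φ, ψ⟩ φ)` maps `ℂⁿ` onto the span, injectively:
pairing its two blocks with `φ` recovers `⟨φ, ψ⟩ σ`, and `σ̄ ⊗ ·` is injective.
-/

open Matrix

section
variable {n : ℕ}

def tensorVec (τ : Fin 2 → ℂ) : (Fin n → ℂ) →ₗ[ℂ] (Fin n ⊕ Fin n → ℂ) where
  toFun ψ := Sum.elim (fun i => τ 0 * ψ i) (fun i => τ 1 * ψ i)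
  map_add' ψ χ := by ext (i | i) <;> simp [mul_add]
  map_smul' c ψ := by ext (i | i) <;> simp [mul_left_comm]

@[simp]
lemma tensorVec_inl (τ : Fin 2 → ℂ) (ψ : Fin n → ℂ) (i : Fin n) :
    tensorVec τ ψ (Sum.inl i) = τ 0 * ψ i := rfl

@[simp]
lemma tensorVec_inr (τ : Fin 2 → ℂ) (ψ : Fin n → ℂ) (i : Fin n) :
    tensorVec τ ψ (Sum.inr i) = τ 1 * ψ i := rfl

lemma tensorVec_comp_inl (τ : Fin 2 → ℂ) (ψ : Fin n → ℂ) :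
    tensorVec τ ψ ∘ Sum.inl = τ 0 • ψ := rfl

lemma tensorVec_comp_inr (τ : Fin 2 → ℂ) (ψ : Fin n → ℂ) :
    tensorVec τ ψ ∘ Sum.inr = τ 1 • ψ := rfl

lemma tensorVec_injective {τ : Fin 2 → ℂ} (hτ : τ ≠ 0) :
    Function.Injective (tensorVec τ : (Fin n → ℂ) → _) := by
  rw [← LinearMap.ker_eq_bot, eq_bot_iff]
  intro ψ hψ
  by_contra hψ0
  have h0 : τ 0 • ψ = 0 := by rw [← tensorVec_comp_inl, hψ]; rfl
  have h1 : τ 1 • ψ = 0 := by rw [← tensorVec_comp_inr, hψ]; rfl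
  exact hτ (funext (Fin.forall_fin_two.2
    ⟨(smul_eq_zero.1 h0).resolve_right hψ0, (smul_eq_zero.1 h1).resolve_right hψ0⟩))

lemma Phi_vecMulVec_tensorVec_mulVec (σ : Fin 2 → ℂ) (φ : Fin n → ℂ) (w : Fin n ⊕ Fin n → ℂ) :
    Phi n (vecMulVec (tensorVec σ φ) (star (tensorVec σ φ))) *ᵥ w = (n : ℂ)⁻¹ • Sum.elim
      ((star φ ⬝ᵥ φ * σ 1) • (conj (σ 1) • (w ∘ Sum.inl) - conj (σ 0) • (w ∘ Sum.inr))
        + ((σ 1 * conj (σ 0) - σ 0 * conj (σ 1)) * (star φ ⬝ᵥ (w ∘ Sum.inr))) • φ)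
      ((star φ ⬝ᵥ φ * σ 0) • (conj (σ 0) • (w ∘ Sum.inr) - conj (σ 1) • (w ∘ Sum.inl))
        + ((σ 0 * conj (σ 1) - σ 1 * conj (σ 0)) * (star φ ⬝ᵥ (w ∘ Sum.inl))) • φ) := by
  set x := tensorVec σ φ
  have h11 : (vecMulVec x (star x)).toBlocks₁₁ = vecMulVec (σ 0 • φ) (star (σ 0 • φ)) := rfl
  have h12 : (vecMulVec x (star x)).toBlocks₁₂ = vecMulVec (σ 0 • φ) (star (σ 1 • φ)) := rfl
  have h21 : (vecMulVec x (star x)).toBlocks₂₁ = vecMulVec (σ 1 • φ) (star (σ 0 • φ)) := rfl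
  have h22 : (vecMulVec x (star x)).toBlocks₂₂ = vecMulVec (σ 1 • φ) (star (σ 1 • φ)) := rfl
  simp only [Phi, Rmap, smul_mulVec, fromBlocks_mulVec, sub_mulVec, neg_mulVec, one_mulVec,
    h11, h12, h21, h22, trace_vecMulVec, vecMulVec_mulVec, op_smul_eq_smul]
  congr 1
  ext (i | i) <;>
    simp only [star_smul, RCLike.star_def, dotProduct_smul, smul_dotProduct,
      dotProduct_comm φ (star φ), smul_eq_mul, Sum.elim_inl, Sum.elim_inr, Pi.add_apply,
      Pi.smul_apply, Function.comp_apply, Pi.sub_apply, Pi.neg_apply] <;>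
    ring

variable {σ : Fin 2 → ℂ} {φ : Fin n → ℂ}

lemma Phi_vecMulVec_tensorVec_mulVec_self (hφ : star φ ⬝ᵥ φ = 1) :
    Phi n (vecMulVec (tensorVec σ φ) (star (tensorVec σ φ))) *ᵥ tensorVec σ φ = 0 := by
  rw [Phi_vecMulVec_tensorVec_mulVec, tensorVec_comp_inl, tensorVec_comp_inr]
  refine smul_eq_zero_of_right _ ?_
  ext (i | i) <;>
    simp only [hφ, dotProduct_smul, smul_eq_mul, one_mul, mul_one, Sum.elim_inl, Sum.elim_inr,
      Pi.add_apply, Pi.smul_apply, Pi.sub_apply, Pi.zero_apply] <;>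
    ring

lemma Phi_vecMulVec_tensorVec_mulVec_tensorVec_star {ψ : Fin n → ℂ} (hψ : star φ ⬝ᵥ ψ = 0) :
    Phi n (vecMulVec (tensorVec σ φ) (star (tensorVec σ φ))) *ᵥ tensorVec (star σ) ψ = 0 := by
  rw [Phi_vecMulVec_tensorVec_mulVec, tensorVec_comp_inl, tensorVec_comp_inr]
  refine smul_eq_zero_of_right _ ?_
  ext (i | i) <;>
    simp only [Pi.star_apply, RCLike.star_def, dotProduct_smul, hψ, smul_eq_mul, mul_zero,
      zero_smul, add_zero, Sum.elim_inl, Sum.elim_inr, Pi.smul_apply, Pi.sub_apply,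
      Pi.zero_apply] <;>
    ring

lemma exists_eq_smul_tensorVec_add_of_mulVec_eq_zero (hσ : star σ ⬝ᵥ σ = 1)
    (hφ : star φ ⬝ᵥ φ = 1) {w : Fin n ⊕ Fin n → ℂ}
    (hw : Phi n (vecMulVec (tensorVec σ φ) (star (tensorVec σ φ))) *ᵥ w = 0) :
    ∃ (c : ℂ) (ψ : Fin n → ℂ), star φ ⬝ᵥ ψ = 0 ∧
      w = c • tensorVec σ φ + tensorVec (star σ) ψ := by
  have hn : (n : ℂ)⁻¹ ≠ 0 := by
    rw [ne_eq, inv_eq_zero, Nat.cast_eq_zero]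
    rintro rfl
    simp [dotProduct] at hφ
  set t := star φ ⬝ᵥ (w ∘ Sum.inl)
  set s := star φ ⬝ᵥ (w ∘ Sum.inr)
  rw [Phi_vecMulVec_tensorVec_mulVec, hφ, smul_eq_zero, or_iff_right hn] at hw
  have hσ' : conj (σ 0) * σ 0 + conj (σ 1) * σ 1 = 1 := by
    simpa [dotProduct, Fin.sum_univ_two] using hσ
  refine ⟨conj (σ 0) * t + conj (σ 1) * s,
    σ 0 • (w ∘ Sum.inl - t • φ) + σ 1 • (w ∘ Sum.inr - s • φ), ?_, ?_⟩
  · simp only [dotProduct_add, dotProduct_smul, dotProduct_sub, hφ]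
    ring
  · ext (i | i)
    · have h₁ := congrFun hw (Sum.inl i)
      simp only [one_mul, Sum.elim_inl, Pi.add_apply, Pi.smul_apply, Pi.sub_apply,
        Function.comp_apply, smul_eq_mul, Pi.zero_apply, map_add, map_smul, map_sub,
        tensorVec_inl, Pi.star_apply, RCLike.star_def] at h₁ ⊢
      linear_combination h₁ - w (Sum.inl i) * hσ'
    · have h₂ := congrFun hw (Sum.inr i)
      simp only [one_mul, Sum.elim_inr, Pi.add_apply, Pi.smul_apply, Pi.sub_apply,
        Function.comp_apply, smul_eq_mul, Pi.zero_apply, map_add, map_smul, map_sub,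
        tensorVec_inr, Pi.star_apply, RCLike.star_def] at h₂ ⊢
      linear_combination h₂ - w (Sum.inr i) * hσ'

variable (σ φ) in
def kernelSpan : Submodule ℂ (Fin n ⊕ Fin n → ℂ) :=
  Submodule.span ℂ ({tensorVec σ φ} ∪
    {y | ∃ ψ : Fin n → ℂ, star φ ⬝ᵥ ψ = 0 ∧ y = tensorVec (star σ) ψ})

lemma star_dotProduct_sub_smul_self (hφ : star φ ⬝ᵥ φ = 1) (ψ : Fin n → ℂ) :
    star φ ⬝ᵥ (ψ - (star φ ⬝ᵥ ψ) • φ) = 0 := by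
  rw [dotProduct_sub, dotProduct_smul, hφ, smul_eq_mul, mul_one, sub_self]

lemma kernelSpan_le_ker (hφ : star φ ⬝ᵥ φ = 1) :
    kernelSpan σ φ ≤
      LinearMap.ker (toLin' (Phi n (vecMulVec (tensorVec σ φ) (star (tensorVec σ φ))))) := by
  rw [kernelSpan, Submodule.span_le]
  rintro _ (rfl | ⟨ψ, hψ, rfl⟩) <;> rw [SetLike.mem_coe, LinearMap.mem_ker, toLin'_apply]
  exacts [Phi_vecMulVec_tensorVec_mulVec_self hφ, Phi_vecMulVec_tensorVec_mulVec_tensorVec_star hψ]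

lemma ker_le_kernelSpan (hσ : star σ ⬝ᵥ σ = 1) (hφ : star φ ⬝ᵥ φ = 1) :
    LinearMap.ker (toLin' (Phi n (vecMulVec (tensorVec σ φ) (star (tensorVec σ φ))))) ≤
      kernelSpan σ φ := by
  intro w hw
  rw [LinearMap.mem_ker, toLin'_apply] at hw
  obtain ⟨c, ψ, hψ, rfl⟩ := exists_eq_smul_tensorVec_add_of_mulVec_eq_zero hσ hφ hw
  exact add_mem (Submodule.smul_mem _ _ (Submodule.subset_span (.inl rfl)))
    (Submodule.subset_span (.inr ⟨ψ, hψ, rfl⟩))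

variable (σ φ) in
/-- The splitting `ℂⁿ = ℂφ ⊕ φ^⊥`, sent onto the two kinds of generators of `kernelSpan σ φ`. -/
def kernelParam : (Fin n → ℂ) →ₗ[ℂ] (Fin n ⊕ Fin n → ℂ) :=
  (dotProductBilin ℂ ℂ (star φ)).smulRight (tensorVec σ φ) +
    tensorVec (star σ) ∘ₗ (LinearMap.id - (dotProductBilin ℂ ℂ (star φ)).smulRight φ)

lemma kernelParam_apply (ψ : Fin n → ℂ) :
    kernelParam σ φ ψ =
      (star φ ⬝ᵥ ψ) • tensorVec σ φ + tensorVec (star σ) (ψ - (star φ ⬝ᵥ ψ) • φ) := rfl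

lemma range_kernelParam (hφ : star φ ⬝ᵥ φ = 1) :
    LinearMap.range (kernelParam σ φ) = kernelSpan σ φ := by
  apply le_antisymm
  · rintro _ ⟨ψ, rfl⟩
    rw [kernelParam_apply]
    exact add_mem (Submodule.smul_mem _ _ (Submodule.subset_span (.inl rfl)))
      (Submodule.subset_span (.inr ⟨_, star_dotProduct_sub_smul_self hφ ψ, rfl⟩))
  · rw [kernelSpan, Submodule.span_le]
    rintro _ (rfl | ⟨ψ, hψ, rfl⟩)
    · exact ⟨φ, by simp [kernelParam_apply, hφ]⟩
    · exact ⟨ψ, by simp [kernelParam_apply, hψ]⟩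

lemma kernelParam_injective (hσ : σ ≠ 0) (hφ : star φ ⬝ᵥ φ = 1) :
    Function.Injective (kernelParam σ φ) := by
  rw [← LinearMap.ker_eq_bot, eq_bot_iff]
  intro ψ hψ
  rw [LinearMap.mem_ker, kernelParam_apply] at hψ
  have h₀ : star φ ⬝ᵥ ((star φ ⬝ᵥ ψ) • σ 0 • φ + star σ 0 • (ψ - (star φ ⬝ᵥ ψ) • φ)) = 0 :=
    (congrArg (fun w => star φ ⬝ᵥ (w ∘ Sum.inl)) hψ).trans (dotProduct_zero _)
  have h₁ : star φ ⬝ᵥ ((star φ ⬝ᵥ ψ) • σ 1 • φ + star σ 1 • (ψ - (star φ ⬝ᵥ ψ) • φ)) = 0 :=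
    (congrArg (fun w => star φ ⬝ᵥ (w ∘ Sum.inr)) hψ).trans (dotProduct_zero _)
  simp only [dotProduct_add, dotProduct_smul, star_dotProduct_sub_smul_self hφ, hφ, smul_eq_mul,
    mul_one, mul_zero, add_zero] at h₀ h₁
  have hc : (star φ ⬝ᵥ ψ) • σ = 0 := funext (Fin.forall_fin_two.2 ⟨h₀, h₁⟩)
  rw [(smul_eq_zero.1 hc).resolve_right hσ] at hψ
  simp only [zero_smul, sub_zero, zero_add] at hψ
  exact tensorVec_injective (star_ne_zero.2 hσ) (hψ.trans (map_zero _).symm)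

lemma finrank_kernelSpan (hσ : σ ≠ 0) (hφ : star φ ⬝ᵥ φ = 1) :
    Module.finrank ℂ (kernelSpan σ φ) = n := by
  rw [← range_kernelParam hφ, LinearMap.finrank_range_of_inj (kernelParam_injective hσ hφ),
    Module.finrank_fin_fun]
end

theorem Phi_product_vector_kernel_general (n : ℕ)
    (σ : Fin 2 → ℂ) (φ : Fin n → ℂ)
    (hσ : (∑ i : Fin 2, conj (σ i) * σ i) = 1)
    (hφ : (∑ i : Fin n, conj (φ i) * φ i) = 1) :
    LinearMap.ker (Matrix.toLin' (Phi n
        (Matrix.vecMulVec (Sum.elim (fun i => σ 0 * φ i) (fun i => σ 1 * φ i))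
          (star (Sum.elim (fun i => σ 0 * φ i) (fun i => σ 1 * φ i)))))) =
      Submodule.span ℂ
        ({Sum.elim (fun i => σ 0 * φ i) (fun i => σ 1 * φ i)} ∪
          {y : Fin n ⊕ Fin n → ℂ | ∃ ψ : Fin n → ℂ,
            (∑ i : Fin n, conj (φ i) * ψ i) = 0 ∧
            y = Sum.elim (fun i => conj (σ 0) * ψ i) (fun i => conj (σ 1) * ψ i)}) ∧
    Module.finrank ℂ
      (LinearMap.ker (Matrix.toLin' (Phi n
        (Matrix.vecMulVec (Sum.elim (fun i => σ 0 * φ i) (fun i => σ 1 * φ i))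
          (star (Sum.elim (fun i => σ 0 * φ i) (fun i => σ 1 * φ i))))))) = n := by
  have hσ0 : σ ≠ 0 := by
    rintro rfl
    simp at hσ
  have hker : LinearMap.ker (toLin' (Phi n (vecMulVec (tensorVec σ φ) (star (tensorVec σ φ))))) =
      kernelSpan σ φ :=
    le_antisymm (ker_le_kernelSpan hσ hφ) (kernelSpan_le_ker hφ)
  exact ⟨hker, hker ▸ finrank_kernelSpan hσ0 hφ⟩

/-- For a normalized product vector `x = σ ⊗ φ ∈ ℂ² ⊗ ℂ^n ≅ ℂ^n ⊕ ℂ^n`, the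
kernel of `Φ_n(|x⟩⟨x|)` is spanned by `σ ⊗ φ` and the vectors `σ̄ ⊗ φ^⊥`
with `φ^⊥ ⊥ φ`; in particular the kernel is `n`-dimensional. -/
theorem Phi_product_vector_kernel (n : ℕ) (hn : 2 ≤ n)
    (σ : Fin 2 → ℂ) (φ : Fin n → ℂ)
    (hσ : (∑ i : Fin 2, conj (σ i) * σ i) = 1)
    (hφ : (∑ i : Fin n, conj (φ i) * φ i) = 1) :
    LinearMap.ker (Matrix.toLin' (Phi n
        (Matrix.vecMulVec (Sum.elim (fun i => σ 0 * φ i) (fun i => σ 1 * φ i))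
          (star (Sum.elim (fun i => σ 0 * φ i) (fun i => σ 1 * φ i)))))) =
      Submodule.span ℂ
        ({Sum.elim (fun i => σ 0 * φ i) (fun i => σ 1 * φ i)} ∪
          {y : Fin n ⊕ Fin n → ℂ | ∃ ψ : Fin n → ℂ,
            (∑ i : Fin n, conj (φ i) * ψ i) = 0 ∧
            y = Sum.elim (fun i => conj (σ 0) * ψ i) (fun i => conj (σ 1) * ψ i)}) ∧
    Module.finrank ℂ
      (LinearMap.ker (Matrix.toLin' (Phi n
        (Matrix.vecMulVec (Sum.elim (fun i => σ 0 * φ i) (fun i => σ 1 * φ i))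
          (star (Sum.elim (fun i => σ 0 * φ i) (fun i => σ 1 * φ i))))))) = n :=
  Phi_product_vector_kernel_general n σ φ hσ hφ
end

section
/- Let φ₁, φ₂ ∈ ℂ^n be linearly independent and not proportional, and set x = φ₁ ⊕ φ₂ ∈ ℂ^{2n}. If y = ψ₁ ⊕ ψ₂ satisfies ⟨y, Φ_n(|x⟩⟨x|) y⟩ = 0, then ψ₁, ψ₂ ∈ span{φ₁, φ₂}. -/
open scoped ComplexOrder

open ComplexConjugate

/-!
Up to the factor `1/n`, `⟨y, Φ_n(|x⟩⟨x|) y⟩` is the form `Q = ⟨ψ₁, V₁⟩ + ⟨ψ₂, V₂⟩`, where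
`V₁, V₂` are the blocks of `n Φ_n(|x⟩⟨x|) y`. Let `G > 0` be the Gram determinant of `φ₁, φ₂`,
`P` the orthogonal projection onto `span {φ₁, φ₂}` and `w = G (ψ₂ - P ψ₂)`. Then
`‖φ₂‖² G Q = G ‖V₁‖² + ‖w‖²`, so `Q = 0` forces `w = 0`, i.e. `ψ₂ ∈ span {φ₁, φ₂}`, and
`V₁ = 0`, which expresses `‖φ₂‖² ψ₁` through `φ₁, φ₂, ψ₂`.
-/

open scoped InnerProductSpace

open Matrix WithLp

namespace PhiKernel

section InnerProductSpace

variable {𝕜 E : Type*} [RCLike 𝕜] [NormedAddCommGroup E] [InnerProductSpace 𝕜 E]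

variable (𝕜) in
/-- For `x = φ₁ ⊕ φ₂` and `y = ψ₁ ⊕ ψ₂`, the blocks of `n • Φ_n(|x⟩⟨x|) y` are
`phiBlock φ₁ φ₂ ψ₁ ψ₂` and `phiBlock φ₂ φ₁ ψ₂ ψ₁`. -/
noncomputable def phiBlock (φ₁ φ₂ ψ₁ ψ₂ : E) : E :=
  ⟪φ₂, φ₂⟫_𝕜 • ψ₁ - ⟪φ₂, ψ₂⟫_𝕜 • φ₁ - ⟪φ₁, φ₂⟫_𝕜 • ψ₂ + ⟪φ₁, ψ₂⟫_𝕜 • φ₂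

variable (𝕜) in
noncomputable def phiForm (φ₁ φ₂ ψ₁ ψ₂ : E) : 𝕜 :=
  ⟪ψ₁, phiBlock 𝕜 φ₁ φ₂ ψ₁ ψ₂⟫_𝕜 + ⟪ψ₂, phiBlock 𝕜 φ₂ φ₁ ψ₂ ψ₁⟫_𝕜

variable (𝕜) in
noncomputable def gramDet (φ₁ φ₂ : E) : 𝕜 :=
  ⟪φ₁, φ₁⟫_𝕜 * ⟪φ₂, φ₂⟫_𝕜 - ⟪φ₁, φ₂⟫_𝕜 * ⟪φ₂, φ₁⟫_𝕜

variable (𝕜) in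
/-- `gramDet φ₁ φ₂ • (ψ - P ψ)`, with the orthogonal projection `P` onto `span {φ₁, φ₂}` written
by Cramer's rule. -/
noncomputable def gramOrthPart (φ₁ φ₂ ψ : E) : E :=
  gramDet 𝕜 φ₁ φ₂ • ψ
    - (⟪φ₂, φ₂⟫_𝕜 * ⟪φ₁, ψ⟫_𝕜 - ⟪φ₁, φ₂⟫_𝕜 * ⟪φ₂, ψ⟫_𝕜) • φ₁
    - (⟪φ₁, φ₁⟫_𝕜 * ⟪φ₂, ψ⟫_𝕜 - ⟪φ₂, φ₁⟫_𝕜 * ⟪φ₁, ψ⟫_𝕜) • φ₂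

variable (𝕜) in
lemma zero_le_inner_self (x : E) : 0 ≤ ⟪x, x⟫_𝕜 := by
  rw [inner_self_eq_norm_sq_to_K]
  exact_mod_cast sq_nonneg ‖x‖

lemma gramDet_pos {φ₁ φ₂ : E} (h : LinearIndependent 𝕜 ![φ₁, φ₂]) : 0 < gramDet 𝕜 φ₁ φ₂ := by
  simpa [det_fin_two, gramDet] using (posDef_gram_of_linearIndependent h).det_pos

lemma inner_self_mul_gramDet_mul_phiForm (φ₁ φ₂ ψ₁ ψ₂ : E) :
    ⟪φ₂, φ₂⟫_𝕜 * gramDet 𝕜 φ₁ φ₂ * phiForm 𝕜 φ₁ φ₂ ψ₁ ψ₂ =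
      gramDet 𝕜 φ₁ φ₂ * ⟪phiBlock 𝕜 φ₁ φ₂ ψ₁ ψ₂, phiBlock 𝕜 φ₁ φ₂ ψ₁ ψ₂⟫_𝕜 +
        ⟪gramOrthPart 𝕜 φ₁ φ₂ ψ₂, gramOrthPart 𝕜 φ₁ φ₂ ψ₂⟫_𝕜 := by
  simp only [phiForm, phiBlock, gramOrthPart, gramDet, inner_add_left, inner_add_right,
    inner_sub_left, inner_sub_right, inner_smul_left, inner_smul_right, map_mul, map_sub,
    inner_conj_symm]
  ring

lemma phiBlock_eq_zero_and_gramOrthPart_eq_zero {φ₁ φ₂ ψ₁ ψ₂ : E}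
    (h : LinearIndependent 𝕜 ![φ₁, φ₂]) (hQ : phiForm 𝕜 φ₁ φ₂ ψ₁ ψ₂ = 0) :
    phiBlock 𝕜 φ₁ φ₂ ψ₁ ψ₂ = 0 ∧ gramOrthPart 𝕜 φ₁ φ₂ ψ₂ = 0 := by
  have hG := gramDet_pos h
  have hsum := inner_self_mul_gramDet_mul_phiForm (𝕜 := 𝕜) φ₁ φ₂ ψ₁ ψ₂
  rw [hQ, mul_zero, eq_comm, add_eq_zero_iff_of_nonneg
    (mul_nonneg hG.le (zero_le_inner_self 𝕜 _)) (zero_le_inner_self 𝕜 _)] at hsum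
  obtain ⟨hV, hw⟩ := hsum
  exact ⟨inner_self_eq_zero.1 ((mul_eq_zero.1 hV).resolve_left hG.ne'), inner_self_eq_zero.1 hw⟩

lemma mem_span_pair_of_gramOrthPart_eq_zero {φ₁ φ₂ ψ : E} (hG : gramDet 𝕜 φ₁ φ₂ ≠ 0)
    (h : gramOrthPart 𝕜 φ₁ φ₂ ψ = 0) : ψ ∈ Submodule.span 𝕜 {φ₁, φ₂} := by
  rw [gramOrthPart, sub_sub, sub_eq_zero] at h
  rw [← Submodule.smul_mem_iff _ hG, h]
  exact Submodule.mem_span_pair.2 ⟨_, _, rfl⟩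

lemma mem_span_pair_of_phiBlock_eq_zero {φ₁ φ₂ ψ₁ ψ₂ : E} (hφ₂ : φ₂ ≠ 0)
    (hψ₂ : ψ₂ ∈ Submodule.span 𝕜 {φ₁, φ₂}) (h : phiBlock 𝕜 φ₁ φ₂ ψ₁ ψ₂ = 0) :
    ψ₁ ∈ Submodule.span 𝕜 {φ₁, φ₂} := by
  have hψ₁ : ⟪φ₂, φ₂⟫_𝕜 • ψ₁ = ⟪φ₂, ψ₂⟫_𝕜 • φ₁ + ⟪φ₁, φ₂⟫_𝕜 • ψ₂ - ⟪φ₁, ψ₂⟫_𝕜 • φ₂ := by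
    rw [← sub_eq_zero, ← h, phiBlock]
    abel
  rw [← Submodule.smul_mem_iff _ ((inner_self_ne_zero (𝕜 := 𝕜)).2 hφ₂), hψ₁]
  exact sub_mem (add_mem (Submodule.smul_mem _ _ (Submodule.subset_span (by simp)))
    (Submodule.smul_mem _ _ hψ₂)) (Submodule.smul_mem _ _ (Submodule.subset_span (by simp)))

theorem mem_span_pair_of_phiForm_eq_zero {φ₁ φ₂ ψ₁ ψ₂ : E}
    (h : LinearIndependent 𝕜 ![φ₁, φ₂]) (hQ : phiForm 𝕜 φ₁ φ₂ ψ₁ ψ₂ = 0) :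
    ψ₁ ∈ Submodule.span 𝕜 {φ₁, φ₂} ∧ ψ₂ ∈ Submodule.span 𝕜 {φ₁, φ₂} := by
  obtain ⟨hV, hw⟩ := phiBlock_eq_zero_and_gramOrthPart_eq_zero h hQ
  have hψ₂ := mem_span_pair_of_gramOrthPart_eq_zero (gramDet_pos h).ne' hw
  exact ⟨mem_span_pair_of_phiBlock_eq_zero (by simpa using h.ne_zero 1) hψ₂ hV, hψ₂⟩

end InnerProductSpace

section Matrix

lemma vecMulVec_sumElim {m n R : Type*} [Mul R] (a : m → R) (b : n → R) (c : m → R)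
    (d : n → R) :
    vecMulVec (Sum.elim a b) (Sum.elim c d) =
      fromBlocks (vecMulVec a c) (vecMulVec a d) (vecMulVec b c) (vecMulVec b d) := by
  ext (i | i) (j | j) <;> rfl

variable {𝕜 ι : Type*} [RCLike 𝕜]

lemma linearIndependent_toLp_pair {a b : ι → 𝕜} (h : LinearIndependent 𝕜 ![a, b]) :
    LinearIndependent 𝕜 ![(toLp 2 a : EuclideanSpace 𝕜 ι), toLp 2 b] := by
  have h' := h.map' (WithLp.linearEquiv 2 𝕜 (ι → 𝕜)).symm.toLinearMap (LinearEquiv.ker _)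
  rwa [show ⇑(WithLp.linearEquiv 2 𝕜 (ι → 𝕜)).symm.toLinearMap ∘ ![a, b] =
      ![toLp 2 a, toLp 2 b] by ext i; fin_cases i <;> rfl] at h'

lemma toLp_mem_span_pair_iff {x a b : ι → 𝕜} :
    (toLp 2 x : EuclideanSpace 𝕜 ι) ∈ Submodule.span 𝕜 {toLp 2 a, toLp 2 b} ↔
      x ∈ Submodule.span 𝕜 {a, b} := by
  simpa [Set.image_pair] using Submodule.apply_mem_span_image_iff_mem_span
    (f := (WithLp.linearEquiv 2 𝕜 (ι → 𝕜)).symm.toLinearMap) (s := {a, b})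
    (WithLp.linearEquiv 2 𝕜 (ι → 𝕜)).symm.injective

variable [Fintype ι]

lemma vecMulVec_star_mulVec (u v w : ι → 𝕜) :
    vecMulVec u (star v) *ᵥ w = ⟪toLp 2 v, toLp 2 w⟫_𝕜 • u := by
  rw [vecMulVec_mulVec, op_smul_eq_smul, EuclideanSpace.inner_toLp_toLp, dotProduct_comm]

lemma trace_vecMulVec_star (u v : ι → 𝕜) :
    (vecMulVec u (star v)).trace = ⟪toLp 2 v, toLp 2 u⟫_𝕜 := by
  rw [trace_vecMulVec, EuclideanSpace.inner_toLp_toLp]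

lemma Phi_vecMulVec_mulVec {n : ℕ} (φ₁ φ₂ ψ₁ ψ₂ : Fin n → ℂ) :
    Phi n (vecMulVec (Sum.elim φ₁ φ₂) (star (Sum.elim φ₁ φ₂))) *ᵥ Sum.elim ψ₁ ψ₂ =
      (n : ℂ)⁻¹ • Sum.elim
        (ofLp (phiBlock ℂ (toLp 2 φ₁) (toLp 2 φ₂) (toLp 2 ψ₁) (toLp 2 ψ₂)))
        (ofLp (phiBlock ℂ (toLp 2 φ₂) (toLp 2 φ₁) (toLp 2 ψ₂) (toLp 2 ψ₁))) := by
  rw [Function.star_sumElim, vecMulVec_sumElim, Phi]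
  simp only [Rmap, toBlocks_fromBlocks₁₁, toBlocks_fromBlocks₁₂, toBlocks_fromBlocks₂₁,
    toBlocks_fromBlocks₂₂, trace_vecMulVec_star, smul_mulVec, fromBlocks_mulVec, sub_mulVec,
    neg_mulVec, one_mulVec, vecMulVec_star_mulVec, Sum.elim_comp_inl, Sum.elim_comp_inr, phiBlock, ofLp_add,
    ofLp_sub, ofLp_smul]
  congr 2 <;> abel

lemma star_dotProduct_Phi_mulVec {n : ℕ} (φ₁ φ₂ ψ₁ ψ₂ : Fin n → ℂ) :
    star (Sum.elim ψ₁ ψ₂) ⬝ᵥ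
        Phi n (vecMulVec (Sum.elim φ₁ φ₂) (star (Sum.elim φ₁ φ₂))) *ᵥ Sum.elim ψ₁ ψ₂ =
      (n : ℂ)⁻¹ * phiForm ℂ (toLp 2 φ₁) (toLp 2 φ₂) (toLp 2 ψ₁) (toLp 2 ψ₂) := by
  rw [Phi_vecMulVec_mulVec, dotProduct_smul, Function.star_sumElim, sumElim_dotProduct_sumElim,
    phiForm, EuclideanSpace.inner_eq_star_dotProduct, EuclideanSpace.inner_eq_star_dotProduct,
    dotProduct_comm, dotProduct_comm (star ψ₂), smul_eq_mul]

end Matrix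

end PhiKernel

open PhiKernel in
/-- If `φ₁, φ₂` are linearly independent (hence not proportional),
`x = φ₁ ⊕ φ₂`, and `y = ψ₁ ⊕ ψ₂` satisfies `⟨y, Φ_n(|x⟩⟨x|) y⟩ = 0`, then
`ψ₁, ψ₂ ∈ span{φ₁, φ₂}`. -/
theorem Phi_kernel_component_span (n : ℕ) (hn : 2 ≤ n)
    (φ₁ φ₂ : Fin n → ℂ) (hind : LinearIndependent ℂ ![φ₁, φ₂])
    (ψ₁ ψ₂ : Fin n → ℂ)
    (h0 : (∑ i : Fin n ⊕ Fin n,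
        conj (Sum.elim ψ₁ ψ₂ i) *
          (Phi n (Matrix.vecMulVec (Sum.elim φ₁ φ₂)
            (star (Sum.elim φ₁ φ₂)))).mulVec (Sum.elim ψ₁ ψ₂) i) = 0) :
    ψ₁ ∈ Submodule.span ℂ {φ₁, φ₂} ∧ ψ₂ ∈ Submodule.span ℂ {φ₁, φ₂} := by
  have hn₀ : (n : ℂ)⁻¹ ≠ 0 := inv_ne_zero (Nat.cast_ne_zero.2 (by omega))
  have hQ : phiForm ℂ (toLp 2 φ₁) (toLp 2 φ₂) (toLp 2 ψ₁) (toLp 2 ψ₂) = 0 :=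
    (mul_eq_zero.1 ((star_dotProduct_Phi_mulVec φ₁ φ₂ ψ₁ ψ₂).symm.trans h0)).resolve_left hn₀
  have hind' := linearIndependent_toLp_pair hind
  obtain ⟨h₁, h₂⟩ := mem_span_pair_of_phiForm_eq_zero hind' hQ
  exact ⟨toLp_mem_span_pair_iff.1 h₁, toLp_mem_span_pair_iff.1 h₂⟩
end

section
/- Let N = span{ x̄ ⊗ x ⊗ y ∈ (ℂ^{2n})^{⊗3} : x, y ∈ ℂ^{2n}, Φ_n(|x⟩⟨x|) y = 0 }. Then dim N = 2n(4n² − 1), i.e., N has codimension 2n in (ℂ^{2n})^{⊗3}. -/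
open scoped ComplexOrder

open ComplexConjugate

/-!
Let `L` be the linear map on `(ℂ^{2n})^{⊗3}` with `L (x̄ ⊗ x ⊗ y) = n Φ_n(|x⟩⟨x|) y`, so that
`N ⊆ ker L`. `L` has a right inverse `S` sending each coordinate vector to minus a basis tensor,
hence `N ∩ range S = 0` and `dim range S = 2n`; the content is `N + range S = ⊤`.
A functional vanishing on `N` is a trilinear form `T` with `T(x̄, x, y) = 0` whenever
`Φ_n(|x⟩⟨x|) y = 0`. Polarizing along the kernel pairs `y = x`, `((a, 0), (u, 0))`,
`((0, b), (0, v))` and `((a, λa), (u, λ̄u))` with `a ⊥ u` shows that `T` is antisymmetric in its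
last two slots, vanishes on the diagonal blocks and has the form `δ_{ik} c_j` on the mixed blocks;
two distinct indices (`n ≥ 2`) and vanishing on `range S` then force `T = 0`.
So `dim N = (2n)³ - 2n`.
-/

lemma coeffs_eq_zero_of_forall_conj_quadratic_eq_zero (c₁ c₂ c₃ c₄ c₅ : ℂ)
    (h : ∀ t : ℂ, c₁ * t + c₂ * conj t + c₃ * t ^ 2 + c₄ * conj t ^ 2 + c₅ * (t * conj t) = 0) :
    c₁ = 0 ∧ c₂ = 0 ∧ c₃ = 0 ∧ c₄ = 0 ∧ c₅ = 0 := by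
  have h₁ := h 1
  have h₂ := h (-1)
  have h₃ := h Complex.I
  have h₄ := h (-Complex.I)
  have h₅ := h (1 + Complex.I)
  simp only [map_one, map_neg, map_add, Complex.conj_I] at h₁ h₂ h₃ h₄ h₅
  have e₁ : c₁ + c₂ = 0 := by linear_combination (h₁ - h₂) / 2
  have e₂ : c₃ + c₄ + c₅ = 0 := by linear_combination (h₁ + h₂) / 2
  have e₃ : c₃ + c₄ - c₅ = 0 := by
    linear_combination (-1/2 : ℂ) * h₃ + (-1/2 : ℂ) * h₄ + (c₃ + c₄ - c₅) * Complex.I_sq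
  have e₄ : c₁ - c₂ = 0 := by
    linear_combination (Complex.I/2) * h₄ - (Complex.I/2) * h₃ + (c₁ - c₂) * Complex.I_sq
  have hc₁ : c₁ = 0 := by linear_combination (e₁ + e₄) / 2
  have hc₂ : c₂ = 0 := by linear_combination (e₁ - e₄) / 2
  have hc₅ : c₅ = 0 := by linear_combination (e₂ - e₃) / 2
  have e₅ : c₃ - c₄ = 0 := by
    linear_combination (-Complex.I/2) * h₅ + (Complex.I/2) * (1 + Complex.I) * hc₁
      + (Complex.I/2) * (1 - Complex.I) * hc₂ + (Complex.I/2) * (1 - Complex.I^2) * hc₅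
      + (Complex.I/2) * (1 + Complex.I^2) * (e₂ + e₃) / 2 + (c₃ - c₄) * Complex.I_sq
  exact ⟨hc₁, hc₂, by linear_combination (e₂ + e₃ + 2 * e₅) / 4,
    by linear_combination (e₂ + e₃ - 2 * e₅) / 4, hc₅⟩

section Trilinear

variable {ι : Type*} [Fintype ι]

def tri (T : ι → ι → ι → ℂ) (u v w : ι → ℂ) : ℂ :=
  ∑ i, ∑ j, ∑ k, T i j k * u i * v j * w k

variable (T : ι → ι → ι → ℂ) (u u' v v' w w' : ι → ℂ) (c : ℂ)

@[simp] lemma tri_add_left : tri T (u + u') v w = tri T u v w + tri T u' v w := by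
  simp only [tri, Pi.add_apply, mul_add, add_mul, Finset.sum_add_distrib]

@[simp] lemma tri_add_mid : tri T u (v + v') w = tri T u v w + tri T u v' w := by
  simp only [tri, Pi.add_apply, mul_add, add_mul, Finset.sum_add_distrib]

@[simp] lemma tri_add_right : tri T u v (w + w') = tri T u v w + tri T u v w' := by
  simp only [tri, Pi.add_apply, mul_add, Finset.sum_add_distrib]

@[simp] lemma tri_smul_left : tri T (c • u) v w = c * tri T u v w := by
  simp only [tri, Pi.smul_apply, smul_eq_mul, Finset.mul_sum, mul_comm, mul_left_comm]

@[simp] lemma tri_smul_mid : tri T u (c • v) w = c * tri T u v w := by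
  simp only [tri, Pi.smul_apply, smul_eq_mul, Finset.mul_sum, mul_comm, mul_left_comm]

@[simp] lemma tri_smul_right : tri T u v (c • w) = c * tri T u v w := by
  simp only [tri, Pi.smul_apply, smul_eq_mul, Finset.mul_sum, mul_comm, mul_left_comm]

@[simp] lemma tri_zero_left : tri T 0 v w = 0 := by simp [tri]

@[simp] lemma tri_zero_mid : tri T u 0 w = 0 := by simp [tri]

@[simp] lemma tri_zero_right : tri T u v 0 = 0 := by simp [tri]

@[simp] lemma tri_zero_tensor : tri 0 u v w = 0 := by simp [tri]

lemma tri_single [DecidableEq ι] (i j k : ι) :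
    tri T (Pi.single i 1) (Pi.single j 1) (Pi.single k 1) = T i j k := by
  simp [tri, Pi.single_apply]

lemma tri_single_right [DecidableEq ι] (k : ι) :
    tri T u v (Pi.single k 1) = ∑ i, ∑ j, T i j k * u i * v j := by
  simp [tri, Pi.single_apply]

variable {T} [DecidableEq ι]

lemma eq_zero_of_tri_star_self_eq_zero (h : ∀ a u, tri T (star a) a u = 0) : T = 0 := by
  have polar : ∀ y z u, tri T (star y) z u = 0 := fun y z u =>
    (coeffs_eq_zero_of_forall_conj_quadratic_eq_zero _ (tri T (star z) y u) 0 0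
      (tri T (star z) z u) fun t => by
        have := h (y + t • z) u
        simp only [star_add, star_smul, tri_add_left, tri_add_mid, tri_smul_left, tri_smul_mid,
          h y u, Complex.star_def] at this
        linear_combination this).1
  ext i j k
  simpa [Pi.star_single, tri_single] using polar (Pi.single i 1) (Pi.single j 1) (Pi.single k 1)

lemma add_swap_right_eq_zero_of_tri_star_self_self (h : ∀ x, tri T (star x) x x = 0) (i j k : ι) :
    T i j k + T i k j = 0 := by
  have polar₁ : ∀ y z, tri T (star y) z z = 0 := fun y z =>
    (coeffs_eq_zero_of_forall_conj_quadratic_eq_zero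
      (tri T (star y) z y + tri T (star y) y z) (tri T (star z) y y) _ 0
      (tri T (star z) z y + tri T (star z) y z) fun t => by
        have := h (y + t • z)
        simp only [star_add, star_smul, tri_add_left, tri_add_mid, tri_add_right, tri_smul_left,
          tri_smul_mid, tri_smul_right, h y, h z, Complex.star_def] at this
        linear_combination this).2.2.1
  have polar₂ : ∀ y z w, tri T (star y) z w + tri T (star y) w z = 0 := fun y z w => by
    have := polar₁ y (z + w)
    rw [tri_add_mid, tri_add_right, tri_add_right, polar₁, polar₁, zero_add, add_zero] at this
    linear_combination this
  simpa [Pi.star_single, tri_single] using polar₂ (Pi.single i 1) (Pi.single j 1) (Pi.single k 1)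

lemma add_swap_left_eq_zero_of_tri_star_star_self (h : ∀ x, tri T (star x) (star x) x = 0)
    (i j k : ι) : T i j k + T j i k = 0 := by
  have polar₁ : ∀ z y, tri T (star z) (star z) y = 0 := fun z y =>
    (coeffs_eq_zero_of_forall_conj_quadratic_eq_zero (tri T (star y) (star y) z)
      (tri T (star y) (star z) y + tri T (star z) (star y) y) 0 _
      (tri T (star y) (star z) z + tri T (star z) (star y) z) fun t => by
        have := h (y + t • z)
        simp only [star_add, star_smul, tri_add_left, tri_add_mid, tri_add_right, tri_smul_left,
          tri_smul_mid, tri_smul_right, h y, h z, Complex.star_def] at this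
        linear_combination this).2.2.2.1
  have polar₂ : ∀ z w y, tri T (star z) (star w) y + tri T (star w) (star z) y = 0 := by
    intro z w y
    have := polar₁ (z + w) y
    simp only [star_add, tri_add_left, tri_add_mid, polar₁] at this
    linear_combination this
  simpa [Pi.star_single, tri_single] using polar₂ (Pi.single i 1) (Pi.single j 1) (Pi.single k 1)

end Trilinear

section Orthogonal

variable {ι : Type*} [Fintype ι] [DecidableEq ι] {X : ι → ι → ι → ℂ}
  (hX : ∀ a u, star a ⬝ᵥ u = 0 → tri X (star a) a u = 0)
include hX

/-- Testing against `u = ā_l e_k - ā_k e_l ⊥ a` gives `ā_l X(ā, a, e_k) = ā_k X(ā, a, e_l)`,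
a cubic identity in `(ā, ā, a)` which polarizes to this antisymmetry. -/
lemma tri_orthogonal_antisymm (k l t s t' : ι) :
    X t t' k * (if s = l then 1 else 0) - X t t' l * (if s = k then 1 else 0)
      + (X s t' k * (if t = l then 1 else 0) - X s t' l * (if t = k then 1 else 0)) = 0 := by
  refine add_swap_left_eq_zero_of_tri_star_star_self (T := fun t s t' =>
    X t t' k * (if s = l then 1 else 0) - X t t' l * (if s = k then 1 else 0)) (fun a => ?_) t s t'
  have hu : star a ⬝ᵥ (star a l • Pi.single k 1 + (-star a k) • Pi.single l 1) = 0 := by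
    simp [mul_comm]
  have := hX a _ hu
  simp only [tri_add_right, tri_smul_right, tri_single_right] at this
  refine Eq.trans ?_ this
  simp only [tri, Finset.mul_sum, ← Finset.sum_add_distrib]
  refine Finset.sum_congr rfl fun t _ => ?_
  rw [Finset.sum_comm]
  refine Finset.sum_congr rfl fun t' _ => ?_
  simp [sub_mul, ite_mul, Finset.sum_sub_distrib]
  ring

lemma eq_zero_of_orthogonal_of_ne {t k : ι} (htk : t ≠ k) (t' : ι) : X t t' k = 0 := by
  have := tri_orthogonal_antisymm hX k t t t t'
  simp only [if_true, if_neg htk, mul_one, mul_zero, sub_zero] at this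
  linear_combination this / 2

lemma diag_eq_of_orthogonal (t s t' : ι) : X t t' t = X s t' s := by
  obtain rfl | hts := eq_or_ne t s
  · rfl
  have := tri_orthogonal_antisymm hX t s t s t'
  simp only [if_true, if_neg hts, if_neg hts.symm, mul_one, mul_zero, sub_zero, zero_sub] at this
  linear_combination this

end Orthogonal

section PhiFormula

variable {ι : Type*} [Fintype ι]

def phiMulVec (a b u v : ι → ℂ) : ι ⊕ ι → ℂ :=
  Sum.elim ((star b ⬝ᵥ b) • u - (star b ⬝ᵥ v) • a - (star a ⬝ᵥ b) • v + (star a ⬝ᵥ v) • b)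
    ((star a ⬝ᵥ a) • v - (star a ⬝ᵥ u) • b - (star b ⬝ᵥ a) • u + (star b ⬝ᵥ u) • a)

omit [Fintype ι] in
lemma star_sum_elim (a b : ι → ℂ) : star (Sum.elim a b) = Sum.elim (star a) (star b) := by
  ext (i | i) <;> rfl

lemma Phi_vecMulVec_mulVec {n : ℕ} (a b u v : Fin n → ℂ) :
    (Phi n (Matrix.vecMulVec (Sum.elim a b) (star (Sum.elim a b)))).mulVec (Sum.elim u v) =
      (n : ℂ)⁻¹ • phiMulVec a b u v := by
  rw [Phi, Matrix.smul_mulVec, star_sum_elim, Matrix.fromBlocks_mulVec]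
  have h₁₁ : (Matrix.vecMulVec (Sum.elim a b) (Sum.elim (star a) (star b))).toBlocks₁₁ =
    Matrix.vecMulVec a (star a) := rfl
  have h₁₂ : (Matrix.vecMulVec (Sum.elim a b) (Sum.elim (star a) (star b))).toBlocks₁₂ =
    Matrix.vecMulVec a (star b) := rfl
  have h₂₁ : (Matrix.vecMulVec (Sum.elim a b) (Sum.elim (star a) (star b))).toBlocks₂₁ =
    Matrix.vecMulVec b (star a) := rfl
  have h₂₂ : (Matrix.vecMulVec (Sum.elim a b) (Sum.elim (star a) (star b))).toBlocks₂₂ =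
    Matrix.vecMulVec b (star b) := rfl
  rw [h₁₁, h₁₂, h₂₁, h₂₂]
  congr 1
  ext (s | s) <;>
  simp [Rmap, phiMulVec, Matrix.trace_vecMulVec, Matrix.sub_mulVec, Matrix.neg_mulVec,
    Matrix.smul_mulVec, Matrix.vecMulVec_mulVec]
  all_goals simp only [dotProduct_comm _ (star _)]; ring

lemma phiMulVec_swap (a b u v : ι → ℂ) : phiMulVec b a v u = phiMulVec a b u v ∘ Sum.swap := by
  rw [phiMulVec, phiMulVec, Sum.elim_swap]

lemma phiMulVec_self (a b : ι → ℂ) : phiMulVec a b a b = 0 := by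
  ext (s | s) <;> simp [phiMulVec]

lemma phiMulVec_zero (a u : ι → ℂ) : phiMulVec a 0 u 0 = 0 := by
  ext (s | s) <;> simp [phiMulVec]

lemma phiMulVec_smul_of_orthogonal {a u : ι → ℂ} (hau : star a ⬝ᵥ u = 0) (l : ℂ) :
    phiMulVec a (l • a) u (star l • u) = 0 := by
  ext (s | s) <;> simp [phiMulVec, hau, star_smul, smul_smul] <;> ring

end PhiFormula

section Blocks

variable {ι κ : Type*}

def block (T : κ → κ → κ → ℂ) (f g h : ι → κ) : ι → ι → ι → ℂ :=
  fun i j k => T (f i) (g j) (h k)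

variable [Fintype ι]

open Sum in
lemma tri_sum_elim (T : ι ⊕ ι → ι ⊕ ι → ι ⊕ ι → ℂ) (u₁ u₂ v₁ v₂ w₁ w₂ : ι → ℂ) :
    tri T (Sum.elim u₁ u₂) (Sum.elim v₁ v₂) (Sum.elim w₁ w₂) =
      tri (block T inl inl inl) u₁ v₁ w₁ + tri (block T inl inl inr) u₁ v₁ w₂ +
      tri (block T inl inr inl) u₁ v₂ w₁ + tri (block T inl inr inr) u₁ v₂ w₂ +
      tri (block T inr inl inl) u₂ v₁ w₁ + tri (block T inr inl inr) u₂ v₁ w₂ +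
      tri (block T inr inr inl) u₂ v₂ w₁ + tri (block T inr inr inr) u₂ v₂ w₂ := by
  simp only [tri, block, Fintype.sum_sum_type, Sum.elim_inl, Sum.elim_inr, Finset.sum_add_distrib]
  ring

lemma tri_swap (T : ι ⊕ ι → ι ⊕ ι → ι ⊕ ι → ℂ) (u v w : ι ⊕ ι → ℂ) :
    tri (fun i j k => T i.swap j.swap k.swap) u v w =
      tri T (u ∘ Sum.swap) (v ∘ Sum.swap) (w ∘ Sum.swap) := by
  simp only [tri]
  refine Fintype.sum_equiv (Equiv.sumComm ι ι) _ _ fun i => ?_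
  refine Fintype.sum_equiv (Equiv.sumComm ι ι) _ _ fun j => ?_
  refine Fintype.sum_equiv (Equiv.sumComm ι ι) _ _ fun k => ?_
  simp

end Blocks

section KernelTensor

open Sum

variable {ι : Type*} [Fintype ι] [DecidableEq ι] {T : ι ⊕ ι → ι ⊕ ι → ι ⊕ ι → ℂ}
  (hT : ∀ a b u v : ι → ℂ, phiMulVec a b u v = 0 →
    tri T (Sum.elim (star a) (star b)) (Sum.elim a b) (Sum.elim u v) = 0)
include hT

lemma block_inl_inl_inl_eq_zero : block T inl inl inl = 0 :=
  eq_zero_of_tri_star_self_eq_zero fun a u => by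
    simpa [tri_sum_elim] using hT a 0 u 0 (phiMulVec_zero a u)

lemma add_swap_right_eq_zero (i j k : ι ⊕ ι) : T i j k + T i k j = 0 := by
  refine add_swap_right_eq_zero_of_tri_star_self_self (fun x => ?_) i j k
  have := hT (x ∘ inl) (x ∘ inr) _ _ (phiMulVec_self _ _)
  rwa [← star_sum_elim, Sum.elim_comp_inl_inr] at this

lemma tri_blocks_eq_zero_of_orthogonal (h₂ : block T inr inr inr = 0) {a u : ι → ℂ}
    (hau : star a ⬝ᵥ u = 0) :
    tri (block T inl inr inl) (star a) a u = 0 ∧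
      tri (block T inl inl inr) (star a) a u + tri (block T inr inl inl) (star a) a u = 0 := by
  -- the coefficients of `l` and `l̄` in `T(x̄, x, y)` for `x = (a, l a)`, `y = (u, l̄ u)`
  obtain ⟨hl, hl', -⟩ := coeffs_eq_zero_of_forall_conj_quadratic_eq_zero
    (tri (block T inl inr inl) (star a) a u)
    (tri (block T inl inl inr) (star a) a u + tri (block T inr inl inl) (star a) a u)
    0 (tri (block T inr inl inr) (star a) a u)
    (tri (block T inl inr inr) (star a) a u + tri (block T inr inr inl) (star a) a u) fun l => by
      have := hT a (l • a) u (star l • u) (phiMulVec_smul_of_orthogonal hau l)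
      simp only [tri_sum_elim, block_inl_inl_inl_eq_zero hT, h₂, star_smul, tri_smul_left,
        tri_smul_mid, tri_smul_right, tri_zero_tensor, Complex.star_def] at this
      linear_combination this
  exact ⟨hl, hl'⟩

lemma blocks_eq_zero_of_normalized [Nontrivial ι] (h₂ : block T inr inr inr = 0) (i₀ : ι)
    (hnorm : ∀ j, T (inl i₀) (inr j) (inl i₀) = 0) :
    block T inl inr inl = 0 ∧ block T inl inl inr = 0 ∧ block T inr inl inl = 0 := by
  have hX₁ : ∀ a u, star a ⬝ᵥ u = 0 → tri (block T inl inr inl) (star a) a u = 0 :=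
    fun a u hau => (tri_blocks_eq_zero_of_orthogonal hT h₂ hau).1
  have h₁₂₁ : block T inl inr inl = 0 := by
    ext t t' k
    obtain rfl | htk := eq_or_ne t k
    · exact (diag_eq_of_orthogonal hX₁ t i₀ t').trans (hnorm t')
    · exact eq_zero_of_orthogonal_of_ne hX₁ htk t'
  have h₁₁₂ : block T inl inl inr = 0 := by
    ext i j k
    have := add_swap_right_eq_zero hT (inl i) (inl j) (inr k)
    rw [show T (inl i) (inr k) (inl j) = 0 from congr_fun₃ h₁₂₁ i k j, add_zero] at this
    exact this
  have hX₂ : ∀ a u, star a ⬝ᵥ u = 0 → tri (block T inr inl inl) (star a) a u = 0 :=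
    fun a u hau => by simpa [h₁₁₂] using (tri_blocks_eq_zero_of_orthogonal hT h₂ hau).2
  have off_diag : ∀ {t k}, t ≠ k → ∀ t', T (inr t) (inl t') (inl k) = 0 :=
    fun htk t' => eq_zero_of_orthogonal_of_ne hX₂ htk t'
  have diag_of_ne : ∀ {t t'}, t ≠ t' → T (inr t) (inl t') (inl t) = 0 := fun {t t'} htt' => by
    have := add_swap_right_eq_zero hT (inr t) (inl t') (inl t)
    rwa [off_diag htt', add_zero] at this
  refine ⟨h₁₂₁, h₁₁₂, ?_⟩
  ext t t' k
  obtain rfl | htk := eq_or_ne t k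
  · obtain ⟨s, hs⟩ := exists_ne t'
    exact (diag_eq_of_orthogonal hX₂ t s t').trans (diag_of_ne hs)
  · exact off_diag htk t'

omit [DecidableEq ι] in
lemma tri_swap_eq_zero_of_phiMulVec_eq_zero (a b u v : ι → ℂ) (h : phiMulVec a b u v = 0) :
    tri (fun i j k => T i.swap j.swap k.swap) (Sum.elim (star a) (star b)) (Sum.elim a b)
      (Sum.elim u v) = 0 := by
  rw [tri_swap, Sum.elim_swap, Sum.elim_swap, Sum.elim_swap]
  exact hT b a v u (by rw [phiMulVec_swap, h]; rfl)

theorem eq_zero_of_normalized [Nontrivial ι] (i₀ : ι)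
    (h₁ : ∀ j, T (inl i₀) (inr j) (inl i₀) = 0) (h₂ : ∀ j, T (inr i₀) (inl j) (inr i₀) = 0) :
    T = 0 := by
  have hT' := tri_swap_eq_zero_of_phiMulVec_eq_zero hT
  have h₁₁₁ := block_inl_inl_inl_eq_zero hT
  have h₂₂₂ : block T inr inr inr = 0 := block_inl_inl_inl_eq_zero hT'
  obtain ⟨h₁₂₁, h₁₁₂, h₂₁₁⟩ := blocks_eq_zero_of_normalized hT h₂₂₂ i₀ h₁
  obtain ⟨h₂₁₂, h₂₂₁, h₁₂₂⟩ := blocks_eq_zero_of_normalized hT' h₁₁₁ i₀ h₂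
  funext i j k
  rcases i with i | i <;> rcases j with j | j <;> rcases k with k | k
  exacts [congr_fun₃ h₁₁₁ i j k, congr_fun₃ h₁₁₂ i j k, congr_fun₃ h₁₂₁ i j k,
    congr_fun₃ h₁₂₂ i j k, congr_fun₃ h₂₁₁ i j k, congr_fun₃ h₂₁₂ i j k,
    congr_fun₃ h₂₂₁ i j k, congr_fun₃ h₂₂₂ i j k]

end KernelTensor

section Span

open Sum

variable {ι : Type*} [Fintype ι]

def tensor3 {κ : Type*} (u v w : κ → ℂ) : κ × κ × κ → ℂ := fun p => u p.1 * v p.2.1 * w p.2.2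

lemma apply_tensor3 {κ : Type*} [Fintype κ] [DecidableEq κ] (D : (κ × κ × κ → ℂ) →ₗ[ℂ] ℂ)
    (u v w : κ → ℂ) : D (tensor3 u v w) = tri (fun i j k => D (Pi.single (i, j, k) 1)) u v w := by
  have single_eq (p : κ × κ × κ) : (fun q => if p = q then (1 : ℂ) else 0) = Pi.single p 1 := by
    ext q; simp [Pi.single_apply, eq_comm]
  rw [D.pi_apply_eq_sum_univ]
  simp only [single_eq, tri, tensor3, Fintype.sum_prod_type, smul_eq_mul, mul_comm, mul_left_comm,
    mul_assoc]

def phiLift : ((ι ⊕ ι) × (ι ⊕ ι) × (ι ⊕ ι) → ℂ) →ₗ[ℂ] ι ⊕ ι → ℂ where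
  toFun Ψ := Sum.elim
    (fun s => ∑ t, (Ψ (inr t, inr t, inl s) - Ψ (inr t, inl s, inr t)
      + Ψ (inl t, inr s, inr t) - Ψ (inl t, inr t, inr s)))
    (fun s => ∑ t, (Ψ (inl t, inl t, inr s) - Ψ (inl t, inr s, inl t)
      + Ψ (inr t, inl s, inl t) - Ψ (inr t, inl t, inl s)))
  map_add' Ψ Ψ' := by
    ext (s | s) <;> simp only [Pi.add_apply, Sum.elim_inl, Sum.elim_inr, ← Finset.sum_add_distrib]
      <;> exact Finset.sum_congr rfl fun t _ => by ring
  map_smul' c Ψ := by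
    ext (s | s) <;> simp only [Pi.smul_apply, smul_eq_mul, Sum.elim_inl, Sum.elim_inr,
      Finset.mul_sum, RingHom.id_apply] <;> exact Finset.sum_congr rfl fun t _ => by ring

lemma phiLift_tensor3 (x y : ι ⊕ ι → ℂ) :
    phiLift (tensor3 (star x) x y) = phiMulVec (x ∘ inl) (x ∘ inr) (y ∘ inl) (y ∘ inr) := by
  ext (s | s) <;>
  simp [phiLift, tensor3, phiMulVec, dotProduct, Finset.sum_add_distrib, Finset.sum_sub_distrib,
    Finset.sum_mul] <;>
  simp only [← Finset.sum_sub_distrib, ← Finset.sum_add_distrib] <;>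
  exact Finset.sum_congr rfl fun _ _ => by ring

variable (ι) in
def phiKernelTensors : Set ((ι ⊕ ι) × (ι ⊕ ι) × (ι ⊕ ι) → ℂ) :=
  {Ψ | ∃ x y : ι ⊕ ι → ℂ,
    phiMulVec (x ∘ inl) (x ∘ inr) (y ∘ inl) (y ∘ inr) = 0 ∧ Ψ = tensor3 (star x) x y}

lemma span_phiKernelTensors_le_ker :
    Submodule.span ℂ (phiKernelTensors ι) ≤ LinearMap.ker phiLift :=
  Submodule.span_le.2 fun _ ⟨x, y, h, hΨ⟩ => hΨ ▸ (phiLift_tensor3 x y).trans h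

variable [DecidableEq ι]

def phiSection (i₀ : ι) : (ι ⊕ ι → ℂ) →ₗ[ℂ] (ι ⊕ ι) × (ι ⊕ ι) × (ι ⊕ ι) → ℂ where
  toFun z
    | (inr i, inl j, inr k) => if i = i₀ ∧ k = i₀ then -z (inl j) else 0
    | (inl i, inr j, inl k) => if i = i₀ ∧ k = i₀ then -z (inr j) else 0
    | _ => 0
  map_add' z z' := by ext ⟨i | i, j | j, k | k⟩ <;> simp <;> split_ifs <;> ring
  map_smul' c z := by ext ⟨i | i, j | j, k | k⟩ <;> simp

lemma phiLift_phiSection (i₀ : ι) (z : ι ⊕ ι → ℂ) : phiLift (phiSection i₀ z) = z := by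
  ext (s | s) <;> simp [phiLift, phiSection]

omit [Fintype ι] in
lemma phiSection_single_inl (i₀ j : ι) :
    phiSection i₀ (Pi.single (inl j) 1) = -Pi.single (inr i₀, inl j, inr i₀) 1 := by
  ext ⟨i | i, j' | j', k | k⟩ <;> simp [phiSection, Pi.single_apply]; split_ifs <;> simp_all

omit [Fintype ι] in
lemma phiSection_single_inr (i₀ j : ι) :
    phiSection i₀ (Pi.single (inr j) 1) = -Pi.single (inl i₀, inr j, inl i₀) 1 := by
  ext ⟨i | i, j' | j', k | k⟩ <;> simp [phiSection, Pi.single_apply]; split_ifs <;> simp_all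

theorem isCompl_span_phiKernelTensors_range_phiSection [Nontrivial ι] (i₀ : ι) :
    IsCompl (Submodule.span ℂ (phiKernelTensors ι)) (LinearMap.range (phiSection i₀)) := by
  constructor
  · rw [Submodule.disjoint_def]
    rintro _ hN ⟨z, rfl⟩
    have : phiLift (phiSection i₀ z) = 0 := span_phiKernelTensors_le_ker hN
    rw [phiLift_phiSection] at this
    rw [this, map_zero]
  · rw [codisjoint_iff, ← Submodule.dualAnnihilator_eq_bot_iff, Submodule.dualAnnihilator_sup_eq,
      eq_bot_iff]
    rintro D ⟨hN, hS⟩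
    rw [SetLike.mem_coe, Submodule.mem_dualAnnihilator] at hN hS
    have hD : (fun i j k => D (Pi.single (i, j, k) 1)) = 0 := by
      refine eq_zero_of_normalized (fun a b u v h => ?_) i₀ (fun j => ?_) (fun j => ?_)
      · rw [← star_sum_elim, ← apply_tensor3]
        exact hN _ (Submodule.subset_span ⟨Sum.elim a b, Sum.elim u v, h, rfl⟩)
      · simpa [phiSection_single_inr] using hS _ ⟨Pi.single (inr j) 1, rfl⟩
      · simpa [phiSection_single_inl] using hS _ ⟨Pi.single (inl j) 1, rfl⟩
    exact LinearMap.pi_ext' fun p => LinearMap.ext_ring (congr_fun₃ hD p.1 p.2.1 p.2.2)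

theorem finrank_span_phiKernelTensors [Nontrivial ι] :
    Module.finrank ℂ (Submodule.span ℂ (phiKernelTensors ι)) =
      2 * Fintype.card ι * (4 * Fintype.card ι ^ 2 - 1) := by
  obtain ⟨i₀⟩ := (inferInstance : Nonempty ι)
  have hS : Function.Injective (phiSection i₀) :=
    Function.LeftInverse.injective (phiLift_phiSection i₀)
  have := Submodule.finrank_add_eq_of_isCompl (isCompl_span_phiKernelTensors_range_phiSection i₀)
  rw [LinearMap.finrank_range_of_inj hS] at this
  simp only [Module.finrank_fintype_fun_eq_card, Fintype.card_prod, Fintype.card_sum] at this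
  rw [Nat.mul_sub_one]
  have hcube : (Fintype.card ι + Fintype.card ι) * ((Fintype.card ι + Fintype.card ι) *
      (Fintype.card ι + Fintype.card ι)) = 2 * Fintype.card ι * (4 * Fintype.card ι ^ 2) := by
    ring
  omega

end Span

lemma setOf_Phi_mulVec_eq_phiKernelTensors {n : ℕ} (hn : n ≠ 0) :
    {Ψ : (Fin n ⊕ Fin n) × (Fin n ⊕ Fin n) × (Fin n ⊕ Fin n) → ℂ |
      ∃ x y : Fin n ⊕ Fin n → ℂ, (Phi n (Matrix.vecMulVec x (star x))).mulVec y = 0 ∧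
        Ψ = fun p => conj (x p.1) * x p.2.1 * y p.2.2} = phiKernelTensors (Fin n) := by
  ext Ψ
  refine exists₂_congr fun x y => and_congr ?_ Iff.rfl
  rw [← Sum.elim_comp_inl_inr x, ← Sum.elim_comp_inl_inr y, Phi_vecMulVec_mulVec, smul_eq_zero,
    or_iff_right (inv_ne_zero (Nat.cast_ne_zero.2 hn))]
  rfl

/-- Strong spanning property of `Φ_n`: the subspace
`N = span{ x̄ ⊗ x ⊗ y : Φ_n(|x⟩⟨x|) y = 0 } ⊂ (ℂ^{2n})^{⊗3}` has dimension
`2n(4n² − 1) = ((2n)² − 1)·(2n)`. -/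
theorem dim_N (n : ℕ) (hn : 2 ≤ n) :
    Module.finrank ℂ
      ↥(Submodule.span ℂ
        {Ψ : (Fin n ⊕ Fin n) × (Fin n ⊕ Fin n) × (Fin n ⊕ Fin n) → ℂ |
          ∃ x y : Fin n ⊕ Fin n → ℂ,
            (Phi n (Matrix.vecMulVec x (star x))).mulVec y = 0 ∧
            Ψ = fun p => conj (x p.1) * x p.2.1 * y p.2.2}) =
      2 * n * (4 * n ^ 2 - 1) := by
  have : Nontrivial (Fin n) := Fin.nontrivial_iff_two_le.2 hn
  rw [setOf_Phi_mulVec_eq_phiKernelTensors (by omega), finrank_span_phiKernelTensors,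
    Fintype.card_fin]
end
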